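/- arXiv:1806.01806 — 5 statements merged into one kernel-verified Lean document; each statement's English description precedes it below -/
import Mathlib

section
/- Fix real numbers ω(k), k ∈ Λ*, and let (Λ₀*, Λ₊*) be a split of Λ* separated by an energy interval [a,b] with gap ratio δ ≤ 1/2, and let ρ > ρ_c(L) with Δ := ρ − ρ_c(L). Suppose there is 0 < ε̃ ≤ 1 such that e_k ≤ (2ρ)^{−1} L^{−d} ε̃ for all k ∈ Λ₀*. Then W₂(μ₁, μ₁')² ≤ 2⁵ V ρ ε̃; i.e., there exists a coupling γ of μ₁ and μ₁' with ∫‖Φ−Ψ‖² dγ ≤ 2⁵ V ρ ε̃. -/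
open MeasureTheory Finset
noncomputable section
namespace BK

/-- The discrete cube `Λ_L ⊂ ℤ^d` with `L` points per side centred at the origin. -/
def cube (d L : ℕ) : Finset (Fin d → ℤ) :=
  Fintype.piFinset fun _ => Finset.Icc (-(((L : ℤ) - 1) / 2)) ((L : ℤ) / 2)

/-- Index type for the dual lattice `Λ* = Λ_L / L` (parametrized by `n ∈ Λ_L`, `k = n/L`). -/
abbrev Lat (d L : ℕ) := {n : Fin d → ℤ // n ∈ cube d L}

variable {d L : ℕ}

/-- `ω₀ := min_{k ∈ Λ*} ω(k)`. -/
def omega0 (ω : Lat d L → ℝ) : ℝ := ⨅ k, ω k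

/-- Excess energies `e_k := ω(k) − ω₀`. -/
def ee (ω : Lat d L → ℝ) (k : Lat d L) : ℝ := ω k - omega0 ω

/-- Critical density `ρ_c(L) := V^{−1} ∑_{k∈Λ₊*} 1/e_k`, where `Λ₊* = Sᶜ`. -/
def rhoC (ω : Lat d L → ℝ) (S : Finset (Lat d L)) : ℝ :=
  (∑ k ∈ Sᶜ, (ee ω k)⁻¹) / (L : ℝ) ^ d

/-- Normalization of a measure to a probability measure. -/
def normalize {X : Type*} [MeasurableSpace X] (μ : Measure X) : Measure X :=
  (μ Set.univ)⁻¹ • μ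

/-- Identification of `ℝ^{K × {1,2}}` with `ℂ^K`. -/
def toField (K : Type*) [Fintype K] (x : EuclideanSpace ℝ (K × Fin 2)) : K → ℂ :=
  fun k => ⟨x (k, 0), x (k, 1)⟩

/-- Surface measure (up to a positive constant) on the Euclidean sphere
`{Φ ∈ ℂ^K : ∑_k |Φ_k|² = R²}`. -/
def sphereMeasure (K : Type*) [Fintype K] (R : ℝ) : Measure (K → ℂ) :=
  Measure.map
    (fun Ω : Metric.sphere (0 : EuclideanSpace ℝ (K × Fin 2)) 1 =>
      toField K (R • (Ω : EuclideanSpace ℝ (K × Fin 2))))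
    (volume : Measure (EuclideanSpace ℝ (K × Fin 2))).toSphere

/-- The energy `H[Φ] := V^{−1} ∑_{k} ω(k) |Φ_k|²`. -/
def energyH (ω : Lat d L → ℝ) (Φ : Lat d L → ℂ) : ℝ :=
  (∑ k, ω k * ‖Φ k‖ ^ 2) / (L : ℝ) ^ d

/-- The Berlin–Kac measure `μ₀` at density `ρ`. -/
def muZero (ω : Lat d L → ℝ) (ρ : ℝ) : Measure (Lat d L → ℂ) :=
  normalize ((sphereMeasure (Lat d L) ((L : ℝ) ^ d * Real.sqrt ρ)).withDensity
    fun Φ => ENNReal.ofReal (Real.exp (-(energyH ω Φ))))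

/-- Law of a complex r.v. with independent real and imaginary parts `N(0, v)`. -/
def gaussC (v : ℝ) : Measure ℂ :=
  Measure.map Complex.measurableEquivRealProd.symm
    ((ProbabilityTheory.gaussianReal 0 v.toNNReal).prod
      (ProbabilityTheory.gaussianReal 0 v.toNNReal))

instance (v : ℝ) : IsProbabilityMeasure (gaussC v) :=
  Measure.isProbabilityMeasure_map Complex.measurableEquivRealProd.symm.measurable.aemeasurable

/-- The Gaussian normal-fluid measure `μ₊` on the `Λ₊* = Sᶜ` coordinates. -/
def muPlus (ω : Lat d L → ℝ) (S : Finset (Lat d L)) :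
    Measure (({k : Lat d L // k ∈ Sᶜ}) → ℂ) :=
  Measure.pi fun k => gaussC ((L : ℝ) ^ d / (2 * ee ω k.1))

/-- Condensate energy `E₀[Φ⁰] := V^{−1} ∑_{k ∈ Λ₀*} e_k |Φ_k|²`. -/
def E0 (ω : Lat d L → ℝ) (S : Finset (Lat d L)) (Φ0 : {k : Lat d L // k ∈ S} → ℂ) : ℝ :=
  (∑ k, ee ω k.1 * ‖Φ0 k‖ ^ 2) / (L : ℝ) ^ d

/-- Weight of the condensate part of `μ₁`. -/
def condWeight (ω : Lat d L → ℝ) (S : Finset (Lat d L)) (ρ : ℝ)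
    (Φ0 : {k : Lat d L // k ∈ S} → ℂ) : ℝ :=
  Real.exp (-(E0 ω S Φ0) * (1 - rhoC ω S / (ρ - rhoC ω S))) *
    ∏ k ∈ Sᶜ, (1 - E0 ω S Φ0 * ((L : ℝ) ^ d)⁻¹ / (ee ω k * (ρ - rhoC ω S)))⁻¹

/-- Surface measure on the condensate sphere `{Φ⁰ : ∑_{k∈Λ₀*} |Φ_k|² = ΔV²}`. -/
def condSphere (ω : Lat d L → ℝ) (S : Finset (Lat d L)) (ρ : ℝ) :
    Measure (({k : Lat d L // k ∈ S}) → ℂ) :=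
  sphereMeasure _ ((L : ℝ) ^ d * Real.sqrt (ρ - rhoC ω S))

/-- Combining condensate and normal-fluid coordinates into a full field. -/
def combine (S : Finset (Lat d L))
    (p : ({k : Lat d L // k ∈ S} → ℂ) × ({k : Lat d L // k ∈ Sᶜ} → ℂ)) :
    Lat d L → ℂ :=
  fun k => if h : k ∈ S then p.1 ⟨k, h⟩ else p.2 ⟨k, Finset.mem_compl.mpr h⟩

/-- The factorized supercritical measure `μ₁`. -/
def muOne (ω : Lat d L → ℝ) (S : Finset (Lat d L)) (ρ : ℝ) : Measure (Lat d L → ℂ) :=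
  Measure.map (combine S)
    ((normalize ((condSphere ω S ρ).withDensity
        fun Φ0 => ENNReal.ofReal (condWeight ω S ρ Φ0))).prod (muPlus ω S))

/-- The simplified factorized supercritical measure `μ₁'` (uniform condensate). -/
def muOne' (ω : Lat d L → ℝ) (S : Finset (Lat d L)) (ρ : ℝ) : Measure (Lat d L → ℂ) :=
  Measure.map (combine S) ((normalize (condSphere ω S ρ)).prod (muPlus ω S))

/-- The rescaled squared `ℓ²`-distance `‖Φ−Ψ‖² = V^{−1} ∑_k |Φ_k − Ψ_k|²`. -/
def fieldDistSq (Φ Ψ : Lat d L → ℂ) : ℝ :=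
  (∑ k, ‖Φ k - Ψ k‖ ^ 2) / (L : ℝ) ^ d

/-- `γ` is a coupling of `μ` and `ν`. -/
def IsCoupling {X : Type*} [MeasurableSpace X] (γ : Measure (X × X)) (μ ν : Measure X) : Prop :=
  γ.map Prod.fst = μ ∧ γ.map Prod.snd = ν

/-- The 2-Wasserstein distance w.r.t. the rescaled `ℓ²`-norm. -/
def W2 (μ ν : Measure (Lat d L → ℂ)) : ℝ :=
  sInf {r : ℝ | ∃ γ : Measure ((Lat d L → ℂ) × (Lat d L → ℂ)),
    IsProbabilityMeasure γ ∧ IsCoupling γ μ ν ∧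
    r = Real.sqrt (∫ p, fieldDistSq p.1 p.2 ∂γ)}

end BK

open scoped ENNReal

lemma aux_coupling {X : Type*} [MeasurableSpace X] (ν : Measure X)
    [IsProbabilityMeasure ν] (g : X → ℝ≥0∞) (hg : Measurable g)
    (hg1 : ∫⁻ x, g x ∂ν = 1)
    (c : X × X → ℝ≥0∞) (hc : Measurable c) (hcd : ∀ x, c (x, x) = 0)
    (B D : ℝ≥0∞)
    (hB : ∀ᵐ x ∂ν, 1 - g x ≤ B)
    (hD : ∀ᵐ p ∂(ν.prod ν), c p ≤ D) :
    ∃ γ : Measure (X × X), IsProbabilityMeasure γ ∧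
      γ.map Prod.fst = ν.withDensity g ∧ γ.map Prod.snd = ν ∧
      ∫⁻ p, c p ∂γ ≤ D * B := by
  set t : ℝ≥0∞ := ∫⁻ x, (1 - g x) ∂ν with ht
  set s : ℝ≥0∞ := ∫⁻ x, (g x - 1) ∂ν with hs
  have hmin : Measurable fun x => min (g x) 1 := hg.min measurable_const
  have hgm1 : Measurable fun x => g x - 1 := hg.sub measurable_const
  have h1mg : Measurable fun x => (1 : ℝ≥0∞) - g x := measurable_const.sub hg
  have hid1 : ∀ x, min (g x) 1 + (g x - 1) = g x := by
    intro x
    rcases le_total (g x) 1 with h | h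
    · simp [min_eq_left h, tsub_eq_zero_of_le h]
    · rw [min_eq_right h, add_tsub_cancel_of_le h]
  have hid2 : ∀ x, min (g x) 1 + (1 - g x) = 1 := by
    intro x
    rcases le_total (g x) 1 with h | h
    · rw [min_eq_left h, add_tsub_cancel_of_le h]
    · simp [min_eq_right h, tsub_eq_zero_of_le h]
  have hI2 : (∫⁻ x, min (g x) 1 ∂ν) + t = 1 := by
    rw [ht, ← lintegral_add_left hmin]
    simp only [hid2]
    simp
  have hI1 : (∫⁻ x, min (g x) 1 ∂ν) + s = 1 := by
    rw [hs, ← lintegral_add_left hmin]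
    simp only [hid1]
    exact hg1
  have hminlt : (∫⁻ x, min (g x) 1 ∂ν) ≠ ∞ := by
    intro h; rw [h] at hI2; simp at hI2
  have hst : s = t := by
    have := hI1.trans hI2.symm
    exact (ENNReal.add_right_inj hminlt).mp this
  have htle : t ≤ 1 := by
    rw [← hI2]; exact le_add_self
  have htne : t ≠ ∞ := (htle.trans_lt ENNReal.one_lt_top).ne
  set η : Measure X := ν.withDensity (fun x => min (g x) 1) with hη
  set μr : Measure X := ν.withDensity (fun x => g x - 1) with hμr
  set νr : Measure X := ν.withDensity (fun x => 1 - g x) with hνr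
  have hμr_univ : μr Set.univ = t := by
    rw [hμr, withDensity_apply _ MeasurableSet.univ, setLIntegral_univ, ← hs, hst]
  have hνr_univ : νr Set.univ = t := by
    rw [hνr, withDensity_apply _ MeasurableSet.univ, setLIntegral_univ]
  have hη_univ : η Set.univ = (∫⁻ x, min (g x) 1 ∂ν) := by
    rw [hη, withDensity_apply _ MeasurableSet.univ, setLIntegral_univ]
  haveI : IsFiniteMeasure μr := ⟨by rw [hμr_univ]; exact htle.trans_lt ENNReal.one_lt_top⟩
  haveI : IsFiniteMeasure νr := ⟨by rw [hνr_univ]; exact htle.trans_lt ENNReal.one_lt_top⟩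
  have hdiag : Measurable fun x : X => (x, x) := measurable_id.prodMk measurable_id
  set γ : Measure (X × X) := η.map (fun x => (x, x)) + t⁻¹ • (μr.prod νr) with hγ
  have hμr0 : t = 0 → μr = 0 := fun h => by
    apply Measure.measure_univ_eq_zero.mp; rw [hμr_univ, h]
  have hνr0 : t = 0 → νr = 0 := fun h => by
    apply Measure.measure_univ_eq_zero.mp; rw [hνr_univ, h]
  have hfst : γ.map Prod.fst = ν.withDensity g := by
    rw [hγ, Measure.map_add _ _ measurable_fst, Measure.map_smul,
      Measure.map_map measurable_fst hdiag, Measure.map_fst_prod, hνr_univ]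
    have h2 : t⁻¹ • t • μr = μr := by
      rcases eq_or_ne t 0 with h | h
      · rw [hμr0 h]; simp
      · rw [smul_smul, ENNReal.inv_mul_cancel h htne, one_smul]
    rw [h2]
    have : (Prod.fst ∘ fun x : X => (x, x)) = id := rfl
    rw [this, Measure.map_id, hη, hμr, ← withDensity_add_right _ hgm1]
    congr 1
    funext x; exact hid1 x
  have hsnd : γ.map Prod.snd = ν := by
    rw [hγ, Measure.map_add _ _ measurable_snd, Measure.map_smul,
      Measure.map_map measurable_snd hdiag, Measure.map_snd_prod, hμr_univ]
    have h2 : t⁻¹ • t • νr = νr := by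
      rcases eq_or_ne t 0 with h | h
      · rw [hνr0 h]; simp
      · rw [smul_smul, ENNReal.inv_mul_cancel h htne, one_smul]
    rw [h2]
    have : (Prod.snd ∘ fun x : X => (x, x)) = id := rfl
    rw [this, Measure.map_id, hη, hνr, ← withDensity_add_right _ h1mg,
      show ((fun x => min (g x) 1) + fun x => 1 - g x) = fun _ => (1 : ℝ≥0∞) from
        funext hid2]
    simp
  have hprob : IsProbabilityMeasure γ := by
    constructor
    have h1 : γ Set.univ = η Set.univ + t⁻¹ * (μr Set.univ * νr Set.univ) := by
      rw [hγ, Measure.add_apply, Measure.smul_apply, smul_eq_mul,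
        Measure.map_apply hdiag MeasurableSet.univ, Set.preimage_univ,
        ← Set.univ_prod_univ, Measure.prod_prod]
    rw [h1, hμr_univ, hνr_univ, hη_univ]
    rcases eq_or_ne t 0 with h | h
    · rw [h] at hI2 ⊢; simpa using hI2
    · rw [← mul_assoc, ENNReal.inv_mul_cancel h htne, one_mul, hI2]
  refine ⟨γ, hprob, hfst, hsnd, ?_⟩
  have hcost : ∫⁻ p, c p ∂γ = (∫⁻ x, c (x, x) ∂η) + t⁻¹ * ∫⁻ p, c p ∂(μr.prod νr) := by
    rw [hγ, lintegral_add_measure, lintegral_smul_measure, lintegral_map hc hdiag, smul_eq_mul]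
  have hzero : (∫⁻ x, c (x, x) ∂η) = 0 := by simp [hcd]
  have habs : μr.prod νr ≪ ν.prod ν :=
    (withDensity_absolutelyContinuous ν _).prod (withDensity_absolutelyContinuous ν _)
  have hcbound : ∫⁻ p, c p ∂(μr.prod νr) ≤ D * (t * t) := by
    calc ∫⁻ p, c p ∂(μr.prod νr) ≤ ∫⁻ _, D ∂(μr.prod νr) :=
          lintegral_mono_ae (habs.ae_le hD)
      _ = D * (t * t) := by
          rw [lintegral_const, ← Set.univ_prod_univ, Measure.prod_prod, hμr_univ, hνr_univ]
  have htB : t ≤ B := by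
    calc t ≤ ∫⁻ _, B ∂ν := lintegral_mono_ae hB
      _ = B := by simp
  rw [hcost, hzero, zero_add]
  calc t⁻¹ * ∫⁻ p, c p ∂(μr.prod νr) ≤ t⁻¹ * (D * (t * t)) := by gcongr
    _ ≤ D * t := by
        rcases eq_or_ne t 0 with h | h
        · simp [h]
        · rw [← mul_assoc, ← mul_assoc, mul_comm t⁻¹ D, mul_assoc D,
            ENNReal.inv_mul_cancel h htne, mul_one]
    _ ≤ D * B := by gcongr


namespace BK
open scoped ENNReal

section helpers
variable (K : Type*) [Fintype K]

lemma measurable_toField : Measurable (toField K) := by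
  apply measurable_pi_lambda
  intro k
  have h : (fun x : EuclideanSpace ℝ (K × Fin 2) => toField K x k)
      = fun x => (x (k,0) : ℂ) + (x (k,1) : ℂ) * Complex.I := by
    funext x; simp only [toField]; rw [Complex.mk_eq_add_mul_I]
  rw [h]
  exact (Complex.measurable_ofReal.comp ((measurable_pi_apply _).comp (WithLp.measurable_ofLp 2 _))).add
    ((Complex.measurable_ofReal.comp ((measurable_pi_apply _).comp (WithLp.measurable_ofLp 2 _))).mul_const _)

lemma measurable_sphereMap (R : ℝ) :
    Measurable (fun Ω : Metric.sphere (0 : EuclideanSpace ℝ (K × Fin 2)) 1 =>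
      toField K (R • (Ω : EuclideanSpace ℝ (K × Fin 2)))) :=
  (measurable_toField K).comp (measurable_subtype_coe.const_smul R)

lemma sphereMap_mem (R : ℝ) (Ω : Metric.sphere (0 : EuclideanSpace ℝ (K × Fin 2)) 1) :
    ∑ k, ‖toField K (R • (Ω : EuclideanSpace ℝ (K × Fin 2))) k‖ ^ 2 = R ^ 2 := by
  have hnorm : ∀ z : ℂ, ‖z‖ ^ 2 = z.re ^ 2 + z.im ^ 2 := by
    intro z; rw [Complex.sq_norm, Complex.normSq_apply]; ring
  have h1 : ∀ k : K, ‖toField K (R • (Ω : EuclideanSpace ℝ (K × Fin 2))) k‖ ^ 2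
      = (R * (Ω : EuclideanSpace ℝ (K × Fin 2)) (k, 0)) ^ 2
        + (R * (Ω : EuclideanSpace ℝ (K × Fin 2)) (k, 1)) ^ 2 := by
    intro k; rw [hnorm]; rfl
  simp only [h1]
  have h2 : ∑ p : K × Fin 2, (R * (Ω : EuclideanSpace ℝ (K × Fin 2)) p) ^ 2
      = ∑ k : K, ((R * (Ω : EuclideanSpace ℝ (K × Fin 2)) (k, 0)) ^ 2
        + (R * (Ω : EuclideanSpace ℝ (K × Fin 2)) (k, 1)) ^ 2) := by
    rw [Fintype.sum_prod_type]
    exact Finset.sum_congr rfl fun k _ => by rw [Fin.sum_univ_two]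
  rw [← h2]
  have h3 : ∑ p : K × Fin 2, (R * (Ω : EuclideanSpace ℝ (K × Fin 2)) p) ^ 2
      = R ^ 2 * ∑ p : K × Fin 2, ((Ω : EuclideanSpace ℝ (K × Fin 2)) p) ^ 2 := by
    rw [Finset.mul_sum]; exact Finset.sum_congr rfl fun p _ => by ring
  have h4 : ∑ p : K × Fin 2, ((Ω : EuclideanSpace ℝ (K × Fin 2)) p) ^ 2 = 1 := by
    have hΩ : ‖(Ω : EuclideanSpace ℝ (K × Fin 2))‖ = 1 := by
      have := Ω.2; simpa using this
    have h5' := EuclideanSpace.norm_eq (Ω : EuclideanSpace ℝ (K × Fin 2))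
    rw [hΩ] at h5'
    have h5 : Real.sqrt (∑ p, ‖(Ω : EuclideanSpace ℝ (K × Fin 2)) p‖ ^ 2) = 1 := h5'.symm
    have h6 := congrArg (· ^ 2) h5
    simp only [one_pow] at h6
    rw [Real.sq_sqrt (by positivity)] at h6
    simpa [sq_abs] using h6
  rw [h3, h4, mul_one]

lemma measurable_sumSq : Measurable (fun Φ : K → ℂ => ∑ k, ‖Φ k‖ ^ 2) :=
  Finset.measurable_sum _ fun k _ => (measurable_pi_apply k).norm.pow_const 2

lemma sphereMeasure_compl (R : ℝ) :
    sphereMeasure K R {Φ : K → ℂ | ∑ k, ‖Φ k‖ ^ 2 = R ^ 2}ᶜ = 0 := by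
  have hA : MeasurableSet {Φ : K → ℂ | ∑ k, ‖Φ k‖ ^ 2 = R ^ 2} :=
    measurable_sumSq K (measurableSet_singleton (R ^ 2))
  rw [sphereMeasure, Measure.map_apply (measurable_sphereMap K R) hA.compl]
  convert measure_empty
  · ext Ω
    simp only [Set.mem_preimage, Set.mem_compl_iff, Set.mem_setOf_eq, Set.mem_empty_iff_false,
      iff_false, not_not]
    exact sphereMap_mem K R Ω
  · infer_instance

lemma sphereMeasure_univ (R : ℝ) :
    sphereMeasure K R Set.univ
      = (volume : Measure (EuclideanSpace ℝ (K × Fin 2))).toSphere Set.univ := by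
  rw [sphereMeasure, Measure.map_apply (measurable_sphereMap K R) MeasurableSet.univ,
    Set.preimage_univ]

lemma sphereMeasure_univ_pos [Nonempty K] (R : ℝ) : 0 < sphereMeasure K R Set.univ := by
  rw [sphereMeasure_univ, Measure.toSphere_apply_univ]
  have h1 : (0:ℝ≥0∞) < volume (Metric.ball (0 : EuclideanSpace ℝ (K × Fin 2)) 1) :=
    Metric.measure_ball_pos _ _ one_pos
  have h2 : 0 < Module.finrank ℝ (EuclideanSpace ℝ (K × Fin 2)) := by
    rw [finrank_euclideanSpace]; simp [Fintype.card_pos]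
  exact ENNReal.mul_pos (by exact_mod_cast h2.ne') h1.ne'

lemma sphereMeasure_univ_lt_top (R : ℝ) : sphereMeasure K R Set.univ < ⊤ := by
  rw [sphereMeasure_univ]; exact measure_lt_top _ _

end helpers

section weight
variable {d L : ℕ}

lemma condWeight_bounds
    (ω : Lat d L → ℝ) (S : Finset (Lat d L)) (ρ εt : ℝ)
    (hV : 0 < ((L:ℝ)^d))
    (hρpos : 0 < ρ) (hrc_pos : 0 < rhoC ω S) (hρ : rhoC ω S < ρ)
    (he0 : ∀ k, 0 ≤ ee ω k) (heP : ∀ k ∈ Sᶜ, 0 < ee ω k)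
    (hεt0 : 0 < εt) (hεt1 : εt ≤ 1)
    (hsmall : ∀ k ∈ S, ee ω k ≤ (2 * ρ)⁻¹ * ((L : ℝ) ^ d)⁻¹ * εt)
    (Φ0 : {k : Lat d L // k ∈ S} → ℂ)
    (hΦ0 : ∑ k, ‖Φ0 k‖^2 = ((L:ℝ)^d)^2 * (ρ - rhoC ω S)) :
    Real.exp (-εt) ≤ condWeight ω S ρ Φ0 ∧ condWeight ω S ρ Φ0 ≤ Real.exp (2*εt) := by
  set V : ℝ := (L:ℝ)^d with hVdef
  set rc : ℝ := rhoC ω S with hrc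
  set Δ : ℝ := ρ - rc with hΔdef
  have hΔpos : 0 < Δ := sub_pos.mpr hρ
  have hrcρ : rc ≤ ρ := hρ.le
  set E : ℝ := E0 ω S Φ0 with hE
  have hE_nonneg : 0 ≤ E := by
    rw [hE, E0]
    apply div_nonneg _ hV.le
    exact Finset.sum_nonneg fun k _ => mul_nonneg (he0 k.1) (by positivity)
  have hE_le : E ≤ Δ * εt / (2 * ρ) := by
    rw [hE, E0]
    rw [div_le_iff₀ hV]
    calc ∑ k, ee ω k.1 * ‖Φ0 k‖ ^ 2
        ≤ ∑ k, ((2 * ρ)⁻¹ * V⁻¹ * εt) * ‖Φ0 k‖ ^ 2 :=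
          Finset.sum_le_sum fun k _ =>
            mul_le_mul_of_nonneg_right (hsmall k.1 k.2) (by positivity)
      _ = ((2 * ρ)⁻¹ * V⁻¹ * εt) * ∑ k, ‖Φ0 k‖ ^ 2 := (Finset.mul_sum _ _ _).symm
      _ = ((2 * ρ)⁻¹ * V⁻¹ * εt) * (V ^ 2 * Δ) := by rw [hΦ0]
      _ = Δ * εt / (2 * ρ) * V := by field_simp
  have hEΔ : E / Δ ≤ εt / (2 * ρ) := by
    rw [div_le_iff₀ hΔpos]
    calc E ≤ Δ * εt / (2 * ρ) := hE_le
      _ = εt / (2 * ρ) * Δ := by ring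
  have hEhalf : E ≤ εt / 2 := by
    have hkey : Δ * εt / (2 * ρ) ≤ εt / 2 := by
      rw [div_le_div_iff₀ (by linarith) (by norm_num)]
      nlinarith
    exact hE_le.trans hkey
  have hErc : E * (rc / Δ) ≤ εt / 2 := by
    have h1 : E * (rc / Δ) = (E / Δ) * rc := by ring
    rw [h1]
    calc E / Δ * rc ≤ (εt / (2 * ρ)) * ρ :=
        mul_le_mul hEΔ hrcρ hrc_pos.le (by positivity)
      _ = εt / 2 := by field_simp
  rw [condWeight, ← hE, ← hrc, ← hΔdef, ← hVdef]
  set x : Lat d L → ℝ := fun k => E * V⁻¹ / (ee ω k * Δ) with hx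
  have hx0 : ∀ k ∈ Sᶜ, 0 ≤ x k := fun k hk =>
    div_nonneg (mul_nonneg hE_nonneg (by positivity)) (mul_nonneg (heP k hk).le hΔpos.le)
  have hxsum : ∑ k ∈ Sᶜ, x k ≤ εt / 2 := by
    have h1 : ∑ k ∈ Sᶜ, x k = (E / Δ / V) * ∑ k ∈ Sᶜ, (ee ω k)⁻¹ := by
      rw [Finset.mul_sum]
      refine Finset.sum_congr rfl fun k hk => ?_
      simp only [hx, div_eq_mul_inv, mul_inv]; ring
    rw [h1]
    have h2 : (E / Δ / V) * ∑ k ∈ Sᶜ, (ee ω k)⁻¹ = (E / Δ) * rc := by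
      rw [hrc, rhoC, ← hVdef]; field_simp
    rw [h2]
    calc E / Δ * rc ≤ (εt / (2 * ρ)) * ρ :=
        mul_le_mul hEΔ hrcρ hrc_pos.le (by positivity)
      _ = εt / 2 := by field_simp
  have hxk : ∀ k ∈ Sᶜ, x k ≤ 1 / 2 := by
    intro k hk
    calc x k ≤ ∑ j ∈ Sᶜ, x j := Finset.single_le_sum hx0 hk
      _ ≤ εt / 2 := hxsum
      _ ≤ 1 / 2 := by linarith
  have hfac : ∀ k ∈ Sᶜ, (1:ℝ) ≤ (1 - x k)⁻¹ ∧ (1 - x k)⁻¹ ≤ Real.exp (2 * x k) := by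
    intro k hk
    have h0 := hx0 k hk
    have h2 := hxk k hk
    have hpos : 0 < 1 - x k := by linarith
    constructor
    · rw [inv_eq_one_div, le_div_iff₀ hpos]; linarith
    · have hb : (1 - x k)⁻¹ ≤ 1 + 2 * x k := by
        rw [inv_eq_one_div, div_le_iff₀ hpos]
        nlinarith
      calc (1 - x k)⁻¹ ≤ 1 + 2 * x k := hb
        _ ≤ Real.exp (2 * x k) := by
            have := Real.add_one_le_exp (2 * x k); linarith
  set P : ℝ := ∏ k ∈ Sᶜ, (1 - E * V⁻¹ / (ee ω k * Δ))⁻¹ with hP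
  have hPx : P = ∏ k ∈ Sᶜ, (1 - x k)⁻¹ := rfl
  have hP1 : 1 ≤ P := by
    rw [hPx]
    calc (1:ℝ) = ∏ k ∈ Sᶜ, (1:ℝ) := Finset.prod_const_one.symm
      _ ≤ ∏ k ∈ Sᶜ, (1 - x k)⁻¹ :=
        Finset.prod_le_prod (fun k _ => zero_le_one) (fun k hk => (hfac k hk).1)
  have hP2 : P ≤ Real.exp εt := by
    rw [hPx]
    calc ∏ k ∈ Sᶜ, (1 - x k)⁻¹ ≤ ∏ k ∈ Sᶜ, Real.exp (2 * x k) :=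
        Finset.prod_le_prod (fun k hk => le_trans zero_le_one (hfac k hk).1)
          (fun k hk => (hfac k hk).2)
      _ = Real.exp (∑ k ∈ Sᶜ, 2 * x k) := (Real.exp_sum _ _).symm
      _ ≤ Real.exp εt := by
          apply Real.exp_le_exp.2
          rw [← Finset.mul_sum]
          linarith [hxsum]
  set u : ℝ := -E * (1 - rc / Δ) with hu
  have hu_eq : u = -E + E * (rc / Δ) := by rw [hu]; ring
  have hErc0 : 0 ≤ E * (rc / Δ) :=
    mul_nonneg hE_nonneg (div_nonneg hrc_pos.le hΔpos.le)
  have hu_lo : -εt ≤ u := by rw [hu_eq]; linarith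
  have hu_hi : u ≤ εt / 2 := by rw [hu_eq]; linarith
  constructor
  · calc Real.exp (-εt) = Real.exp (-εt) * 1 := (mul_one _).symm
      _ ≤ Real.exp u * P :=
        mul_le_mul (Real.exp_le_exp.2 hu_lo) hP1 zero_le_one (Real.exp_pos _).le
  · calc Real.exp u * P ≤ Real.exp (εt / 2) * Real.exp εt :=
        mul_le_mul (Real.exp_le_exp.2 hu_hi) hP2 (le_trans zero_le_one hP1)
          (Real.exp_pos _).le
      _ = Real.exp (εt / 2 + εt) := (Real.exp_add _ _).symm
      _ ≤ Real.exp (2 * εt) := Real.exp_le_exp.2 (by linarith)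

end weight
end BK

set_option maxHeartbeats 2000000 in
open BK in
/-- coupling bound between `μ₁` and `μ₁'` under a small condensate-energy
assumption: `W₂(μ₁, μ₁')² ≤ 2⁵ V ρ ε̃`. -/
theorem muOne_muOne'_coupling_bound
    (d L : ℕ) (hd : 1 ≤ d) (hL : 2 ≤ L)
    (ω : Lat d L → ℝ) (S : Finset (Lat d L))
    (hS : S.Nonempty) (hSc : Sᶜ.Nonempty)
    (a b : ℝ) (ha : 0 ≤ a) (hab : a < b)
    (hsep0 : ∀ k ∈ S, ee ω k ≤ a) (hsepP : ∀ k ∈ Sᶜ, b ≤ ee ω k)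
    (δ : ℝ) (hδdef : δ = S.sup' hS (ee ω) / Sᶜ.inf' hSc (ee ω)) (hδ : δ ≤ 1 / 2)
    (ρ : ℝ) (hρ : rhoC ω S < ρ)
    (Δ : ℝ) (hΔ : Δ = ρ - rhoC ω S)
    (εt : ℝ) (hεt0 : 0 < εt) (hεt1 : εt ≤ 1)
    (hsmall : ∀ k ∈ S, ee ω k ≤ (2 * ρ)⁻¹ * ((L : ℝ) ^ d)⁻¹ * εt) :
    (∃ γ : Measure ((Lat d L → ℂ) × (Lat d L → ℂ)),
      IsProbabilityMeasure γ ∧ IsCoupling γ (muOne ω S ρ) (muOne' ω S ρ) ∧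
      ∫ p, fieldDistSq p.1 p.2 ∂γ ≤ 2 ^ 5 * (L : ℝ) ^ d * ρ * εt) ∧
    W2 (muOne ω S ρ) (muOne' ω S ρ) ^ 2 ≤ 2 ^ 5 * (L : ℝ) ^ d * ρ * εt := by
  classical
  haveI : Nonempty (Lat d L) := ⟨hS.choose⟩
  haveI hKne : Nonempty {k : Lat d L // k ∈ S} := ⟨⟨hS.choose, hS.choose_spec⟩⟩
  have hL0 : (0:ℝ) < (L:ℝ) := by exact_mod_cast (by omega : 0 < L)
  have hV : (0:ℝ) < (L:ℝ) ^ d := by positivity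
  set V : ℝ := (L:ℝ) ^ d with hVdef
  have hb0 : 0 < b := lt_of_le_of_lt ha hab
  have heP : ∀ k ∈ Sᶜ, 0 < ee ω k := fun k hk => lt_of_lt_of_le hb0 (hsepP k hk)
  have he0 : ∀ k, 0 ≤ ee ω k := fun k =>
    sub_nonneg.mpr (ciInf_le (Finite.bddBelow_range _) k)
  have hrc_pos : 0 < rhoC ω S := by
    rw [rhoC]
    exact div_pos (Finset.sum_pos (fun k hk => inv_pos.mpr (heP k hk)) hSc) hV
  have hρpos : 0 < ρ := hrc_pos.trans hρ
  have hΔpos : 0 < ρ - rhoC ω S := sub_pos.mpr hρ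
  have hΔρ : ρ - rhoC ω S ≤ ρ := by linarith
  -- the condensate sphere measure
  set K := {k : Lat d L // k ∈ S}
  set R : ℝ := V * Real.sqrt (ρ - rhoC ω S) with hRdef
  have hmdef : condSphere ω S ρ = sphereMeasure K R := rfl
  have hR2 : R ^ 2 = V ^ 2 * (ρ - rhoC ω S) := by
    rw [hRdef, mul_pow, Real.sq_sqrt hΔpos.le]
  set A : Set (K → ℂ) := {Φ0 | ∑ k, ‖Φ0 k‖ ^ 2 = V ^ 2 * (ρ - rhoC ω S)} with hAdef
  have hAmeas : MeasurableSet A :=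
    measurable_sumSq K (measurableSet_singleton (V ^ 2 * (ρ - rhoC ω S)))
  set m : Measure (K → ℂ) := condSphere ω S ρ with hmdef2
  have hmA : m Aᶜ = 0 := by
    have h1 : A = {Φ0 : K → ℂ | ∑ k, ‖Φ0 k‖ ^ 2 = R ^ 2} := by
      rw [hAdef, hR2]
    rw [hmdef, h1]
    exact sphereMeasure_compl K R
  set M : ℝ≥0∞ := m Set.univ with hMdef
  have hM0 : M ≠ 0 := by
    rw [hMdef, hmdef]; exact (sphereMeasure_univ_pos K R).ne'
  have hMtop : M ≠ ⊤ := by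
    rw [hMdef, hmdef]; exact (sphereMeasure_univ_lt_top K R).ne
  -- the weight
  set w : (K → ℂ) → ℝ≥0∞ := fun Φ0 => ENNReal.ofReal (condWeight ω S ρ Φ0) with hwdef
  have hE0m : Measurable (E0 ω S) := by
    unfold E0
    exact (Finset.measurable_sum _ fun k _ =>
      ((measurable_pi_apply k).norm.pow_const 2).const_mul _).div_const _
  have hwmeas0 : Measurable (condWeight ω S ρ) := by
    unfold condWeight
    exact (Real.measurable_exp.comp (hE0m.neg.mul_const _)).mul
      (Finset.measurable_prod _ fun k _ =>
        (measurable_const.sub ((hE0m.mul_const _).div_const _)).inv)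
  have hwmeas : Measurable w := hwmeas0.ennreal_ofReal
  have hwb : ∀ Φ0 ∈ A, Real.exp (-εt) ≤ condWeight ω S ρ Φ0
      ∧ condWeight ω S ρ Φ0 ≤ Real.exp (2 * εt) := fun Φ0 h =>
    condWeight_bounds ω S ρ εt hV hρpos hrc_pos hρ he0 heP hεt0 hεt1 hsmall Φ0 h
  have hmae : ∀ᵐ Φ0 ∂m, Φ0 ∈ A := by
    rw [ae_iff]
    exact hmA
  set W : ℝ≥0∞ := ∫⁻ Φ0, w Φ0 ∂m with hWdef
  have hWhi : W ≤ ENNReal.ofReal (Real.exp (2 * εt)) * M := by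
    rw [hWdef]
    calc ∫⁻ Φ0, w Φ0 ∂m ≤ ∫⁻ _, ENNReal.ofReal (Real.exp (2 * εt)) ∂m :=
        lintegral_mono_ae (hmae.mono fun Φ0 h =>
          ENNReal.ofReal_le_ofReal (hwb Φ0 h).2)
      _ = ENNReal.ofReal (Real.exp (2 * εt)) * M := by rw [lintegral_const]
  have hWlo : ENNReal.ofReal (Real.exp (-εt)) * M ≤ W := by
    have h1 : ∫⁻ _, ENNReal.ofReal (Real.exp (-εt)) ∂m ≤ ∫⁻ Φ0, w Φ0 ∂m :=
      lintegral_mono_ae (hmae.mono fun Φ0 h =>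
        ENNReal.ofReal_le_ofReal (hwb Φ0 h).1)
    rwa [lintegral_const] at h1
  have hW0 : W ≠ 0 := by
    refine (lt_of_lt_of_le ?_ hWlo).ne'
    exact ENNReal.mul_pos (ENNReal.ofReal_pos.mpr (Real.exp_pos _)).ne' hM0
  have hWtop : W ≠ ⊤ :=
    (lt_of_le_of_lt hWhi (ENNReal.mul_lt_top ENNReal.ofReal_lt_top hMtop.lt_top)).ne
  -- the normalized measures
  set ν : Measure (K → ℂ) := normalize m with hνdef
  have hνs : ν = M⁻¹ • m := rfl
  haveI hνprob : IsProbabilityMeasure ν := by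
    constructor
    rw [hνs, Measure.smul_apply, smul_eq_mul, ← hMdef]
    exact ENNReal.inv_mul_cancel hM0 hMtop
  set g : (K → ℂ) → ℝ≥0∞ := fun Φ0 => (M * W⁻¹) * w Φ0 with hgdef
  have hgmeas : Measurable g := hwmeas.const_mul _
  have hg1 : ∫⁻ Φ0, g Φ0 ∂ν = 1 := by
    rw [hνs, lintegral_smul_measure, hgdef]
    rw [lintegral_const_mul _ hwmeas, ← hWdef]
    rw [mul_assoc M W⁻¹ W, ENNReal.inv_mul_cancel hW0 hWtop, mul_one]
    exact ENNReal.inv_mul_cancel hM0 hMtop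
  have hwduniv : (m.withDensity w) Set.univ = W := by
    rw [withDensity_apply _ MeasurableSet.univ, setLIntegral_univ, hWdef]
  have hwd : ν.withDensity g = normalize (m.withDensity w) := by
    have hgsmul : g = (M * W⁻¹) • w := rfl
    rw [hνs, withDensity_smul_measure, hgsmul, withDensity_smul _ hwmeas,
      smul_smul]
    simp only [BK.normalize]
    rw [hwduniv, ← mul_assoc, ENNReal.inv_mul_cancel hM0 hMtop, one_mul]
  have hνA : ∀ᵐ Φ0 ∂ν, Φ0 ∈ A := by
    rw [ae_iff]
    show ν Aᶜ = 0
    rw [hνs, Measure.smul_apply, hmA, smul_eq_mul, mul_zero]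
  -- lower bound for g on A
  have hBae : ∀ᵐ Φ0 ∂ν, 1 - g Φ0 ≤ ENNReal.ofReal (3 * εt) := by
    refine hνA.mono fun Φ0 hΦ0 => ?_
    have hMW : (ENNReal.ofReal (Real.exp (2 * εt)))⁻¹ ≤ M * W⁻¹ := by
      have h1 : W⁻¹ ≥ (ENNReal.ofReal (Real.exp (2 * εt)) * M)⁻¹ :=
        ENNReal.inv_le_inv.mpr hWhi
      have h2 : (ENNReal.ofReal (Real.exp (2 * εt)) * M)⁻¹
          = (ENNReal.ofReal (Real.exp (2 * εt)))⁻¹ * M⁻¹ :=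
        ENNReal.mul_inv (Or.inl (ENNReal.ofReal_pos.mpr (Real.exp_pos _)).ne')
          (Or.inl ENNReal.ofReal_ne_top)
      calc (ENNReal.ofReal (Real.exp (2 * εt)))⁻¹
          = M * ((ENNReal.ofReal (Real.exp (2 * εt)))⁻¹ * M⁻¹) := by
            rw [mul_comm _ (M⁻¹), ← mul_assoc, ENNReal.mul_inv_cancel hM0 hMtop, one_mul]
        _ ≤ M * W⁻¹ := by
            rw [← h2]; exact mul_le_mul_right h1 M
    have hglo : ENNReal.ofReal (Real.exp (-(3 * εt))) ≤ g Φ0 := by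
      have h3 : ENNReal.ofReal (Real.exp (-εt)) ≤ w Φ0 :=
        ENNReal.ofReal_le_ofReal (hwb Φ0 hΦ0).1
      have h4 : (ENNReal.ofReal (Real.exp (2 * εt)))⁻¹
          = ENNReal.ofReal (Real.exp (-(2 * εt))) := by
        rw [← ENNReal.ofReal_inv_of_pos (Real.exp_pos _), ← Real.exp_neg]
      calc ENNReal.ofReal (Real.exp (-(3 * εt)))
          = ENNReal.ofReal (Real.exp (-(2 * εt))) * ENNReal.ofReal (Real.exp (-εt)) := by
            rw [← ENNReal.ofReal_mul (Real.exp_pos _).le, ← Real.exp_add]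
            congr 2
            ring
        _ ≤ (M * W⁻¹) * w Φ0 := by
            rw [← h4]
            exact mul_le_mul' hMW h3
    refine tsub_le_iff_right.mpr ?_
    calc (1:ℝ≥0∞) = ENNReal.ofReal 1 := by simp
      _ ≤ ENNReal.ofReal (3 * εt + Real.exp (-(3 * εt))) :=
          ENNReal.ofReal_le_ofReal (by nlinarith [Real.add_one_le_exp (-(3 * εt))])
      _ = ENNReal.ofReal (3 * εt) + ENNReal.ofReal (Real.exp (-(3 * εt))) :=
          ENNReal.ofReal_add (by positivity) (by positivity)
      _ ≤ ENNReal.ofReal (3 * εt) + g Φ0 := add_le_add_right hglo _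
  -- the cost function
  set c : ((K → ℂ) × (K → ℂ)) → ℝ≥0∞ :=
    fun p => ENNReal.ofReal ((∑ k, ‖p.1 k - p.2 k‖ ^ 2) / V) with hcdef
  have hcmeas : Measurable c := by
    apply Measurable.ennreal_ofReal
    exact (Finset.measurable_sum _ fun k _ =>
      (((measurable_pi_apply k).comp measurable_fst).sub
        ((measurable_pi_apply k).comp measurable_snd)).norm.pow_const 2).div_const _
  have hcd : ∀ x, c (x, x) = 0 := by
    intro x
    rw [hcdef]
    simp
  have hDae : ∀ᵐ p ∂(ν.prod ν), c p ≤ ENNReal.ofReal (4 * (ρ - rhoC ω S) * V) := by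
    have hνAc : ν Aᶜ = 0 := by
      rw [hνs, Measure.smul_apply, hmA, smul_eq_mul, mul_zero]
    have hprodnull : (ν.prod ν) ((A ×ˢ A)ᶜ) = 0 := by
      have hsub : (A ×ˢ A)ᶜ ⊆ (Aᶜ ×ˢ (Set.univ : Set (K → ℂ)))
          ∪ ((Set.univ : Set (K → ℂ)) ×ˢ Aᶜ) := by
        intro p hp
        simp only [Set.mem_compl_iff, Set.mem_prod, not_and] at hp
        by_cases h1 : p.1 ∈ A
        · right
          simp only [Set.mem_prod, Set.mem_univ, Set.mem_compl_iff, true_and]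
          exact hp h1
        · left
          simp only [Set.mem_prod, Set.mem_univ, Set.mem_compl_iff, and_true]
          exact h1
      refine measure_mono_null hsub (measure_union_null ?_ ?_)
      · rw [Measure.prod_prod, hνAc, zero_mul]
      · rw [Measure.prod_prod, hνAc, mul_zero]
    have hmem : ∀ᵐ p ∂(ν.prod ν), p ∈ A ×ˢ A := by
      rw [ae_iff]
      exact hprodnull
    refine hmem.mono fun p hp => ?_
    obtain ⟨hp1, hp2⟩ := hp
    have hsum : ∑ k, ‖p.1 k - p.2 k‖ ^ 2 ≤ 4 * (V ^ 2 * (ρ - rhoC ω S)) := by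
      calc ∑ k, ‖p.1 k - p.2 k‖ ^ 2
          ≤ ∑ k, (2 * ‖p.1 k‖ ^ 2 + 2 * ‖p.2 k‖ ^ 2) :=
            Finset.sum_le_sum fun k _ => by
              nlinarith [pow_le_pow_left₀ (norm_nonneg _) (norm_sub_le (p.1 k) (p.2 k)) 2,
                sq_nonneg (‖p.1 k‖ - ‖p.2 k‖)]
        _ = 2 * ∑ k, ‖p.1 k‖ ^ 2 + 2 * ∑ k, ‖p.2 k‖ ^ 2 := by
            rw [Finset.sum_add_distrib, ← Finset.mul_sum, ← Finset.mul_sum]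
        _ = 4 * (V ^ 2 * (ρ - rhoC ω S)) := by
            rw [hp1, hp2]; ring
    rw [hcdef]
    apply ENNReal.ofReal_le_ofReal
    rw [div_le_iff₀ hV]
    nlinarith
  -- apply the abstract coupling lemma
  obtain ⟨γ₀, hγ₀prob, hγ₀fst, hγ₀snd, hγ₀cost⟩ :=
    aux_coupling ν g hgmeas hg1 c hcmeas hcd (ENNReal.ofReal (3 * εt))
      (ENNReal.ofReal (4 * (ρ - rhoC ω S) * V)) hBae hDae
  -- lift to the full field space
  set Y := {k : Lat d L // k ∈ Sᶜ}
  set μp : Measure (Y → ℂ) := muPlus ω S with hμpdef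
  haveI hμpprob : IsProbabilityMeasure μp := by
    rw [hμpdef, muPlus]
    infer_instance
  have hcomb : Measurable (combine S) := by
    apply measurable_pi_lambda
    intro k
    by_cases h : k ∈ S
    · have heq : (fun p : (K → ℂ) × (Y → ℂ) => combine S p k) = fun p => p.1 ⟨k, h⟩ := by
        funext p; simp [combine, h]
      rw [heq]; exact (measurable_pi_apply _).comp measurable_fst
    · have heq : (fun p : (K → ℂ) × (Y → ℂ) => combine S p k)
          = fun p => p.2 ⟨k, Finset.mem_compl.mpr h⟩ := by
        funext p; simp [combine, h]
      rw [heq]; exact (measurable_pi_apply _).comp measurable_snd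
  set T : ((K → ℂ) × (K → ℂ)) × (Y → ℂ) → (Lat d L → ℂ) × (Lat d L → ℂ) :=
    fun q => (combine S (q.1.1, q.2), combine S (q.1.2, q.2)) with hTdef
  have hT : Measurable T :=
    (hcomb.comp ((measurable_fst.comp measurable_fst).prodMk measurable_snd)).prodMk
      (hcomb.comp ((measurable_snd.comp measurable_fst).prodMk measurable_snd))
  set γ : Measure ((Lat d L → ℂ) × (Lat d L → ℂ)) := (γ₀.prod μp).map T with hγdef
  haveI : IsProbabilityMeasure (γ₀.prod μp) := by infer_instance
  haveI hγprob : IsProbabilityMeasure γ := Measure.isProbabilityMeasure_map hT.aemeasurable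
  -- marginals
  have hmargfst : γ.map Prod.fst = muOne ω S ρ := by
    rw [hγdef, Measure.map_map measurable_fst hT]
    have h1 : (Prod.fst ∘ T) = (combine S) ∘ (Prod.map Prod.fst id) := rfl
    rw [h1, ← Measure.map_map hcomb (measurable_fst.prodMap measurable_id),
      ← Measure.map_prod_map _ _ measurable_fst measurable_id, Measure.map_id,
      hγ₀fst, hwd]
    rfl
  have hmargsnd : γ.map Prod.snd = muOne' ω S ρ := by
    rw [hγdef, Measure.map_map measurable_snd hT]
    have h1 : (Prod.snd ∘ T) = (combine S) ∘ (Prod.map Prod.snd id) := rfl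
    rw [h1, ← Measure.map_map hcomb (measurable_snd.prodMap measurable_id),
      ← Measure.map_prod_map _ _ measurable_snd measurable_id, Measure.map_id,
      hγ₀snd]
    rfl
  -- the distance identity
  have hkey : ∀ (x y : K → ℂ) (z : Y → ℂ),
      fieldDistSq (combine S (x, z)) (combine S (y, z)) = (∑ k, ‖x k - y k‖ ^ 2) / V := by
    intro x y z
    rw [fieldDistSq, ← hVdef]
    congr 1
    rw [← Finset.sum_add_sum_compl S]
    have h2 : ∑ k ∈ Sᶜ, ‖combine S (x, z) k - combine S (y, z) k‖ ^ 2 = 0 := by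
      apply Finset.sum_eq_zero
      intro k hk
      have hk' : k ∉ S := Finset.mem_compl.mp hk
      simp [combine, hk']
    rw [h2, add_zero,
      ← Finset.sum_attach S (fun k => ‖combine S (x, z) k - combine S (y, z) k‖ ^ 2),
      ← Finset.univ_eq_attach]
    apply Finset.sum_congr rfl
    intro k _
    have h3 : combine S (x, z) k.1 = x k := by simp [combine, k.2]
    have h4 : combine S (y, z) k.1 = y k := by simp [combine, k.2]
    rw [h3, h4]
  -- cost bound
  have hFmeas : Measurable (fun p : (Lat d L → ℂ) × (Lat d L → ℂ) => fieldDistSq p.1 p.2) := by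
    unfold fieldDistSq
    exact (Finset.measurable_sum _ fun k _ =>
      (((measurable_pi_apply k).comp measurable_fst).sub
        ((measurable_pi_apply k).comp measurable_snd)).norm.pow_const 2).div_const _
  have hFnn : ∀ p : (Lat d L → ℂ) × (Lat d L → ℂ), 0 ≤ fieldDistSq p.1 p.2 := by
    intro p
    rw [fieldDistSq]
    positivity
  have hlint : ∫⁻ p, ENNReal.ofReal (fieldDistSq p.1 p.2) ∂γ
      ≤ ENNReal.ofReal (4 * (ρ - rhoC ω S) * V) * ENNReal.ofReal (3 * εt) := by
    rw [hγdef, lintegral_map hFmeas.ennreal_ofReal hT]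
    have h1 : ∀ q : ((K → ℂ) × (K → ℂ)) × (Y → ℂ),
        ENNReal.ofReal (fieldDistSq (T q).1 (T q).2) = c q.1 := by
      intro q
      rw [hTdef]
      simp only
      rw [hkey, hcdef]
    simp only [h1]
    have h2 : ∫⁻ q, c q.1 ∂(γ₀.prod μp) = ∫⁻ p, c p ∂γ₀ := by
      rw [← lintegral_map hcmeas measurable_fst, Measure.map_fst_prod, measure_univ, one_smul]
    rw [h2]
    exact hγ₀cost
  have hbound : ∫ p, fieldDistSq p.1 p.2 ∂γ ≤ 2 ^ 5 * V * ρ * εt := by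
    have hint_eq : ∫ p, fieldDistSq p.1 p.2 ∂γ
        = (∫⁻ p, ENNReal.ofReal (fieldDistSq p.1 p.2) ∂γ).toReal := by
      rw [integral_eq_lintegral_of_nonneg_ae (Filter.Eventually.of_forall hFnn)
        hFmeas.aestronglyMeasurable]
    rw [hint_eq]
    have h3 : ENNReal.ofReal (4 * (ρ - rhoC ω S) * V) * ENNReal.ofReal (3 * εt)
        = ENNReal.ofReal ((4 * (ρ - rhoC ω S) * V) * (3 * εt)) := by
      exact (ENNReal.ofReal_mul (mul_nonneg (by nlinarith : (0:ℝ) ≤ 4 * (ρ - rhoC ω S)) hV.le)).symm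
    calc (∫⁻ p, ENNReal.ofReal (fieldDistSq p.1 p.2) ∂γ).toReal
        ≤ (ENNReal.ofReal ((4 * (ρ - rhoC ω S) * V) * (3 * εt))).toReal := by
          apply ENNReal.toReal_mono ENNReal.ofReal_ne_top
          rw [← h3]
          exact hlint
      _ = (4 * (ρ - rhoC ω S) * V) * (3 * εt) := by
          rw [ENNReal.toReal_ofReal (by positivity)]
      _ ≤ 2 ^ 5 * V * ρ * εt := by
          nlinarith [mul_nonneg (mul_nonneg hV.le hεt0.le)
            (by linarith : (0:ℝ) ≤ 32 * ρ - 12 * (ρ - rhoC ω S))]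
  have hexist : ∃ γ' : Measure ((Lat d L → ℂ) × (Lat d L → ℂ)),
      IsProbabilityMeasure γ' ∧ IsCoupling γ' (muOne ω S ρ) (muOne' ω S ρ) ∧
      ∫ p, fieldDistSq p.1 p.2 ∂γ' ≤ 2 ^ 5 * V * ρ * εt :=
    ⟨γ, hγprob, ⟨hmargfst, hmargsnd⟩, hbound⟩
  refine ⟨hexist, ?_⟩
  -- the W2 bound
  obtain ⟨γ', hγ'prob, hγ'coup, hγ'cost⟩ := hexist
  set I : ℝ := ∫ p, fieldDistSq p.1 p.2 ∂γ' with hIdef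
  have hInn : 0 ≤ I := integral_nonneg fun p => hFnn p
  set SS : Set ℝ := {r : ℝ | ∃ γ'' : Measure ((Lat d L → ℂ) × (Lat d L → ℂ)),
    IsProbabilityMeasure γ'' ∧ IsCoupling γ'' (muOne ω S ρ) (muOne' ω S ρ) ∧
    r = Real.sqrt (∫ p, fieldDistSq p.1 p.2 ∂γ'')} with hSSdef
  have hmem : Real.sqrt I ∈ SS := ⟨γ', hγ'prob, hγ'coup, rfl⟩
  have hlb : ∀ r ∈ SS, (0:ℝ) ≤ r := by
    rintro r ⟨γ'', _, _, rfl⟩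
    exact Real.sqrt_nonneg _
  have hW2eq : W2 (muOne ω S ρ) (muOne' ω S ρ) = sInf SS := rfl
  have hW2le : W2 (muOne ω S ρ) (muOne' ω S ρ) ≤ Real.sqrt I := by
    rw [hW2eq]
    exact csInf_le ⟨0, hlb⟩ hmem
  have hW2nn : 0 ≤ W2 (muOne ω S ρ) (muOne' ω S ρ) := by
    rw [hW2eq]
    exact le_csInf ⟨Real.sqrt I, hmem⟩ hlb
  calc W2 (muOne ω S ρ) (muOne' ω S ρ) ^ 2 ≤ Real.sqrt I ^ 2 :=
      pow_le_pow_left₀ hW2nn hW2le 2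
    _ = I := Real.sq_sqrt hInn
    _ ≤ 2 ^ 5 * V * ρ * εt := hγ'cost
end
end

section
/- Let μ and μ' be gauge invariant probability measures on ℂ^{Λ*}. For x ∈ Λ_L and n > 1 define A_n(x) := max(E_μ[|φ_x|^{2(n−1)}]^{1/(2(n−1))}, E_{μ'}[|φ_x|^{2(n−1)}]^{1/(2(n−1))}), and set A_1(x) := 1. Then: (i) A_n(x) does not depend on x; call its value A_n. (ii) If A_n < ∞, then for every sequence I of length n and every coupling γ of μ and μ', |E_μ[φ^I] − E_{μ'}[φ^I]| ≤ A_n^{n−1} · n · L^{−d/2} · (∫ ‖Φ−Φ'‖² dγ(Φ,Φ'))^{1/2}; consequently |E_μ[φ^I] − E_{μ'}[φ^I]| ≤ A_n^{n−1} n W₂(μ,μ') L^{−d/2}. -/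
open MeasureTheory Finset
noncomputable section
namespace BK
variable {d L : ℕ}

/-- Position-space field `φ_x := V^{−1} ∑_k Φ_k e^{2πi k·x}`, `k = n/L`. -/
def phi (Φ : Lat d L → ℂ) (x : Fin d → ℤ) : ℂ :=
  (∑ k : Lat d L, Φ k *
      Complex.exp (2 * Real.pi * Complex.I * (∑ i, (k.1 i : ℂ) * (x i : ℂ)) / L)) /
    (L : ℂ) ^ d

/-- A measure on fields is gauge invariant if it is invariant under arbitrary
phase rotations of the Fourier modes. -/
def GaugeInvariant (μ : Measure (Lat d L → ℂ)) : Prop :=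
  ∀ θ : Lat d L → ℝ,
    Measure.map (fun Φ k => Complex.exp ((θ k : ℂ) * Complex.I) * Φ k) μ = μ

/-- The moment constant `(E_μ |φ_x|^{2(n−1)})^{1/(2(n−1))}` (equal to `1` for `n = 1`). -/
def Amom (μ : Measure (Lat d L → ℂ)) (n : ℕ) (x : Fin d → ℤ) : ℝ :=
  (∫ Φ, ‖phi Φ x‖ ^ (2 * (n - 1)) ∂μ) ^ ((2 * ((n : ℝ) - 1))⁻¹)

/-- `A_n(x) := max` of the two moment constants. -/
def Amax (μ μ' : Measure (Lat d L → ℂ)) (n : ℕ) (x : Fin d → ℤ) : ℝ :=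
  max (Amom μ n x) (Amom μ' n x)

/-- The monomial `φ^I` for a sequence `I` of sites and conjugation indices. -/
def phiI {n : ℕ} (Φ : Lat d L → ℂ) (I : Fin n → (Fin d → ℤ) × Bool) : ℂ :=
  ∏ i, if (I i).2 then phi Φ (I i).1 else (starRingEnd ℂ) (phi Φ (I i).1)

end BK

namespace BK
variable {d L : ℕ}

lemma measurable_phi (x : Fin d → ℤ) : Measurable fun Φ : Lat d L → ℂ => phi Φ x := by
  unfold phi
  exact (Finset.measurable_sum _ fun k _ => (measurable_pi_apply k).mul_const _).div_const _

lemma measurable_phiI {n : ℕ} (I : Fin n → (Fin d → ℤ) × Bool) :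
    Measurable fun Φ : Lat d L → ℂ => phiI Φ I := by
  unfold phiI
  refine Finset.measurable_prod _ fun i _ => ?_
  by_cases h : (I i).2 <;> simp only [h, if_true, if_false, Bool.false_eq_true]
  · exact measurable_phi _
  · exact continuous_star.measurable.comp (measurable_phi _)

lemma measurable_gauge (θ : Lat d L → ℝ) :
    Measurable fun (Φ : Lat d L → ℂ) (k : Lat d L) =>
      Complex.exp ((θ k : ℂ) * Complex.I) * Φ k :=
  measurable_pi_lambda _ fun k => (measurable_pi_apply k).const_mul _

/-- Translation phases. -/
def tphase (z : Fin d → ℤ) : Lat d L → ℝ :=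
  fun k => 2 * Real.pi * (∑ i, (k.1 i : ℝ) * (z i : ℝ)) / L

lemma phi_gauge (z : Fin d → ℤ) (Φ : Lat d L → ℂ) (x : Fin d → ℤ) :
    phi (fun k => Complex.exp ((tphase z k : ℂ) * Complex.I) * Φ k) x = phi Φ (x + z) := by
  unfold phi tphase
  congr 1
  refine Finset.sum_congr rfl fun k _ => ?_
  dsimp only
  have hsum : (∑ i, (k.1 i : ℂ) * (((x + z) i : ℤ) : ℂ))
      = (∑ i, (k.1 i : ℂ) * ((x i : ℤ) : ℂ)) + ∑ i, (k.1 i : ℂ) * ((z i : ℤ) : ℂ) := by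
    rw [← Finset.sum_add_distrib]
    refine Finset.sum_congr rfl fun i _ => ?_
    simp only [Pi.add_apply]
    push_cast
    ring
  rw [mul_comm (Complex.exp _) (Φ k), mul_assoc, ← Complex.exp_add, hsum]
  congr 2
  push_cast
  ring

lemma lintegral_gauge {μ : Measure (Lat d L → ℂ)} (hμ : GaugeInvariant μ) (θ : Lat d L → ℝ)
    {f : (Lat d L → ℂ) → ENNReal} (hf : Measurable f) :
    ∫⁻ Φ, f Φ ∂μ = ∫⁻ Φ, f (fun k => Complex.exp ((θ k : ℂ) * Complex.I) * Φ k) ∂μ := by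
  conv_lhs => rw [← hμ θ]
  exact lintegral_map hf (measurable_gauge θ)

lemma integral_gauge {μ : Measure (Lat d L → ℂ)} (hμ : GaugeInvariant μ) (θ : Lat d L → ℝ)
    {E : Type*} [NormedAddCommGroup E] [NormedSpace ℝ E]
    {f : (Lat d L → ℂ) → E} (hf : AEStronglyMeasurable f μ) :
    ∫ Φ, f Φ ∂μ = ∫ Φ, f (fun k => Complex.exp ((θ k : ℂ) * Complex.I) * Φ k) ∂μ := by
  conv_lhs => rw [← hμ θ]
  exact integral_map (measurable_gauge θ).aemeasurable (by rwa [hμ θ])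

lemma integral_moment_shift {μ : Measure (Lat d L → ℂ)} (hμ : GaugeInvariant μ)
    (m : ℕ) (x z : Fin d → ℤ) :
    ∫ Φ, ‖phi Φ (x + z)‖ ^ m ∂μ = ∫ Φ, ‖phi Φ x‖ ^ m ∂μ := by
  rw [integral_gauge hμ (tphase z)
    ((measurable_phi x).norm.pow_const m).aestronglyMeasurable]
  simp_rw [phi_gauge]

lemma lintegral_moment_shift {μ : Measure (Lat d L → ℂ)} (hμ : GaugeInvariant μ)
    (m : ℕ) (x z : Fin d → ℤ) :
    ∫⁻ Φ, ENNReal.ofReal (‖phi Φ (x + z)‖ ^ m) ∂μ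
      = ∫⁻ Φ, ENNReal.ofReal (‖phi Φ x‖ ^ m) ∂μ := by
  rw [lintegral_gauge hμ (tphase z)
    (f := fun Φ => ENNReal.ofReal (‖phi Φ x‖ ^ m))
    (((measurable_phi x).norm.pow_const m).ennreal_ofReal)]
  simp_rw [phi_gauge]

lemma integrable_moment_shift {μ : Measure (Lat d L → ℂ)} (hμ : GaugeInvariant μ)
    (m : ℕ) (x z : Fin d → ℤ)
    (h : Integrable (fun Φ => ‖phi Φ x‖ ^ m) μ) :
    Integrable (fun Φ => ‖phi Φ (x + z)‖ ^ m) μ := by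
  set G := fun (Φ : Lat d L → ℂ) k => Complex.exp ((tphase z k : ℂ) * Complex.I) * Φ k with hG
  have hfm : AEStronglyMeasurable (fun Φ => ‖phi Φ x‖ ^ m) (Measure.map G μ) := by
    rw [hμ (tphase z)]
    exact ((measurable_phi x).norm.pow_const m).aestronglyMeasurable
  have h2 : Integrable (fun Φ => ‖phi Φ x‖ ^ m) (Measure.map G μ) := by
    rw [hμ (tphase z)]; exact h
  have := (integrable_map_measure hfm (measurable_gauge (tphase z)).aemeasurable).mp h2
  have heq : (fun Φ => ‖phi Φ x‖ ^ m) ∘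
      (fun (Φ : Lat d L → ℂ) k => Complex.exp ((tphase z k : ℂ) * Complex.I) * Φ k)
      = fun Φ => ‖phi Φ (x + z)‖ ^ m := by
    funext Φ; simp only [Function.comp_apply, phi_gauge]
  rwa [heq] at this

lemma Amom_shift {μ : Measure (Lat d L → ℂ)} (hμ : GaugeInvariant μ)
    (n : ℕ) (x y : Fin d → ℤ) : Amom μ n x = Amom μ n y := by
  have h := integral_moment_shift hμ (2 * (n - 1)) x (y - x)
  rw [add_sub_cancel] at h
  unfold Amom
  rw [h]

lemma Amax_shift {μ μ' : Measure (Lat d L → ℂ)} (hμ : GaugeInvariant μ)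
    (hμ' : GaugeInvariant μ') (n : ℕ) (x y : Fin d → ℤ) :
    Amax μ μ' n x = Amax μ μ' n y := by
  unfold Amax
  rw [Amom_shift hμ n x y, Amom_shift hμ' n x y]

lemma zero_mem_cube (hL : 1 ≤ L) : (0 : Fin d → ℤ) ∈ cube d L := by
  rw [cube, Fintype.mem_piFinset]
  intro i
  rw [Finset.mem_Icc, Pi.zero_apply]
  constructor <;> [skip; skip] <;>
    · have : (1 : ℤ) ≤ (L : ℤ) := by exact_mod_cast hL
      omega

lemma card_cube (hL : 1 ≤ L) : (cube d L).card = L ^ d := by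
  rw [cube, Fintype.card_piFinset]
  have h : ((Finset.Icc (-(((L : ℤ) - 1) / 2)) ((L : ℤ) / 2)).card = L) := by
    rw [Int.card_Icc]
    have : (1 : ℤ) ≤ (L : ℤ) := by exact_mod_cast hL
    omega
  simp [h]

lemma sum_exp_line (hL : 2 ≤ L) (m : ℤ) (hm0 : m ≠ 0) (hmL : m.natAbs < L) (y : ℤ) :
    ∑ c ∈ Finset.Icc (-(((L : ℤ) - 1) / 2)) ((L : ℤ) / 2),
      Complex.exp (2 * Real.pi * Complex.I * (m : ℂ) * ((y : ℂ) + (c : ℂ)) / L) = 0 := by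
  have hLC : (L : ℂ) ≠ 0 := Nat.cast_ne_zero.mpr (by omega)
  set ζ : ℂ := Complex.exp (2 * Real.pi * Complex.I * (m : ℂ) / L) with hζ
  have hζ0 : ζ ≠ 0 := Complex.exp_ne_zero _
  have hexp : ∀ c : ℤ, Complex.exp (2 * Real.pi * Complex.I * (m : ℂ) * ((y : ℂ) + (c : ℂ)) / L)
      = ζ ^ (y + c) := by
    intro c
    rw [hζ, ← Complex.exp_int_mul]
    congr 1
    push_cast
    ring
  have hζ1 : ζ ≠ 1 := by
    intro h
    rw [hζ, Complex.exp_eq_one_iff] at h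
    obtain ⟨k, hk⟩ := h
    have hne : (2 * (Real.pi : ℂ) * Complex.I) ≠ 0 := by
      refine mul_ne_zero (mul_ne_zero two_ne_zero ?_) Complex.I_ne_zero
      exact Complex.ofReal_ne_zero.mpr Real.pi_ne_zero
    have h' : (m : ℂ) / L = k := by
      apply mul_left_cancel₀ hne
      calc 2 * (Real.pi : ℂ) * Complex.I * ((m : ℂ) / L)
          = 2 * Real.pi * Complex.I * (m : ℂ) / L := by ring
        _ = k * (2 * Real.pi * Complex.I) := hk
        _ = 2 * (Real.pi : ℂ) * Complex.I * k := by ring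
    have h2 : (m : ℂ) = k * L := by
      field_simp at h'
      exact h'.trans (mul_comm _ _)
    have h3 : m = k * L := by exact_mod_cast h2
    have h4 : m.natAbs = k.natAbs * L := by
      rw [h3, Int.natAbs_mul]
      simp
    have h5 : k ≠ 0 := by rintro rfl; simp at h3; exact hm0 h3
    have h6 : 1 ≤ k.natAbs := Int.natAbs_pos.mpr h5
    nlinarith [hmL]
  have hzeta_L : ζ ^ (L : ℕ) = 1 := by
    rw [hζ, ← Complex.exp_nat_mul]
    have : (L : ℂ) * (2 * Real.pi * Complex.I * (m : ℂ) / L) = m * (2 * Real.pi * Complex.I) := by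
      field_simp
    rw [this, Complex.exp_int_mul_two_pi_mul_I]
  have hcard : (((L : ℤ) / 2) + 1 - (-(((L : ℤ) - 1) / 2))).toNat = L := by
    have : (1 : ℤ) ≤ (L : ℤ) := by exact_mod_cast (by omega : 1 ≤ L)
    omega
  calc ∑ c ∈ Finset.Icc (-(((L : ℤ) - 1) / 2)) ((L : ℤ) / 2),
        Complex.exp (2 * Real.pi * Complex.I * (m : ℂ) * ((y : ℂ) + (c : ℂ)) / L)
      = ∑ c ∈ Finset.Icc (-(((L : ℤ) - 1) / 2)) ((L : ℤ) / 2), ζ ^ (y + c) := by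
        exact Finset.sum_congr rfl fun c _ => hexp c
    _ = ∑ j ∈ Finset.range L, ζ ^ (y + (-(((L : ℤ) - 1) / 2) + (j : ℤ))) := by
        rw [Int.Icc_eq_finset_map, Finset.sum_map, hcard]
        rfl
    _ = (ζ ^ (y + (-(((L : ℤ) - 1) / 2)))) * ∑ j ∈ Finset.range L, ζ ^ (j : ℕ) := by
        rw [Finset.mul_sum]
        refine Finset.sum_congr rfl fun j _ => ?_
        rw [← zpow_natCast ζ j, ← zpow_add₀ hζ0]
        congr 1
        ring
    _ = 0 := by
        rw [geom_sum_eq hζ1, hzeta_L]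
        simp

lemma natAbs_lt_of_mem_Icc (hL : 2 ≤ L) {a b : ℤ}
    (ha : a ∈ Finset.Icc (-(((L : ℤ) - 1) / 2)) ((L : ℤ) / 2))
    (hb : b ∈ Finset.Icc (-(((L : ℤ) - 1) / 2)) ((L : ℤ) / 2)) :
    (a - b).natAbs < L := by
  rw [Finset.mem_Icc] at ha hb
  have : (2 : ℤ) ≤ (L : ℤ) := by exact_mod_cast hL
  omega

lemma sum_exp_orth (hL : 2 ≤ L) (a b : Lat d L) (y : Fin d → ℤ) :
    ∑ z ∈ cube d L, Complex.exp (2 * Real.pi * Complex.I *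
        (∑ i, ((a.1 i : ℂ) - (b.1 i : ℂ)) * ((y i : ℂ) + (z i : ℂ))) / L)
      = if a = b then ((L : ℂ) ^ d) else 0 := by
  by_cases hab : a = b
  · subst hab
    rw [if_pos rfl]
    have : ∀ z ∈ cube d L, Complex.exp (2 * Real.pi * Complex.I *
        (∑ i, ((a.1 i : ℂ) - (a.1 i : ℂ)) * ((y i : ℂ) + (z i : ℂ))) / L) = 1 := by
      intro z _
      simp
    rw [Finset.sum_congr rfl this, Finset.sum_const, card_cube (by omega)]
    simp
  · rw [if_neg hab]
    have hsplit : ∀ z ∈ cube d L, Complex.exp (2 * Real.pi * Complex.I *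
        (∑ i, ((a.1 i : ℂ) - (b.1 i : ℂ)) * ((y i : ℂ) + (z i : ℂ))) / L)
        = ∏ i, Complex.exp (2 * Real.pi * Complex.I *
            ((a.1 i : ℂ) - (b.1 i : ℂ)) * ((y i : ℂ) + (z i : ℂ)) / L) := by
      intro z _
      rw [← Complex.exp_sum]
      congr 1
      rw [Finset.mul_sum, Finset.sum_div]
      refine Finset.sum_congr rfl fun i _ => ?_
      ring
    rw [Finset.sum_congr rfl hsplit]
    unfold cube
    rw [← Finset.prod_univ_sum (fun _ : Fin d => Finset.Icc (-(((L : ℤ) - 1) / 2)) ((L : ℤ) / 2))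
      (fun i c => Complex.exp (2 * Real.pi * Complex.I *
        ((a.1 i : ℂ) - (b.1 i : ℂ)) * ((y i : ℂ) + (c : ℂ)) / L))]
    obtain ⟨i₀, hi₀⟩ : ∃ i₀, a.1 i₀ ≠ b.1 i₀ := by
      by_contra hcon
      push_neg at hcon
      exact hab (Subtype.ext (funext hcon))
    refine Finset.prod_eq_zero (Finset.mem_univ i₀) ?_
    have ha := a.2; have hb := b.2
    unfold cube at ha hb
    rw [Fintype.mem_piFinset] at ha hb
    have hline := sum_exp_line hL (a.1 i₀ - b.1 i₀)
      (fun h => hi₀ (by omega)) (natAbs_lt_of_mem_Icc hL (ha i₀) (hb i₀)) (y i₀)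
    rw [← hline]
    refine Finset.sum_congr rfl fun c _ => ?_
    congr 2
    push_cast
    ring

lemma parseval (hL : 2 ≤ L) (Δ : Lat d L → ℂ) (y : Fin d → ℤ) :
    ∑ z ∈ cube d L, ‖phi Δ (y + z)‖ ^ 2 = (∑ k, ‖Δ k‖ ^ 2) / (L : ℝ) ^ d := by
  have hLC : (L : ℂ) ≠ 0 := Nat.cast_ne_zero.mpr (by omega)
  set V : ℂ := (L : ℂ) ^ d with hV
  have hV0 : V ≠ 0 := pow_ne_zero _ hLC
  set T : Lat d L → (Fin d → ℤ) → ℂ := fun k u =>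
    Complex.exp (2 * Real.pi * Complex.I * (∑ i, (k.1 i : ℂ) * ((u i : ℤ) : ℂ)) / L) with hT
  have hsq : ∀ w : ℂ, ((‖w‖ ^ 2 : ℝ) : ℂ) = w * (starRingEnd ℂ) w := by
    intro w
    rw [Complex.mul_conj]
    norm_cast
    rw [Complex.normSq_eq_norm_sq]
  have hTT : ∀ (k j : Lat d L) (u : Fin d → ℤ), T k u * (starRingEnd ℂ) (T j u)
      = Complex.exp (2 * Real.pi * Complex.I *
          (∑ i, ((k.1 i : ℂ) - (j.1 i : ℂ)) * ((u i : ℤ) : ℂ)) / L) := by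
    intro k j u
    rw [hT]
    rw [← Complex.exp_conj, ← Complex.exp_add]
    congr 1
    simp only [map_div₀, map_mul, map_sum, Complex.conj_I, Complex.conj_ofReal, map_ofNat,
      map_intCast, Complex.conj_natCast]
    have hs : (∑ i, ((k.1 i : ℂ) - (j.1 i : ℂ)) * ((u i : ℤ) : ℂ))
        = (∑ i, (k.1 i : ℂ) * ((u i : ℤ) : ℂ)) - ∑ i, (j.1 i : ℂ) * ((u i : ℤ) : ℂ) := by
      rw [← Finset.sum_sub_distrib]
      exact Finset.sum_congr rfl fun i _ => by ring
    rw [hs]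
    ring
  have hphi : ∀ u : Fin d → ℤ, phi Δ u * (starRingEnd ℂ) (phi Δ u)
      = (∑ k, ∑ j, Δ k * (starRingEnd ℂ) (Δ j) * (T k u * (starRingEnd ℂ) (T j u))) / (V * V) := by
    intro u
    unfold phi
    rw [map_div₀, map_sum]
    simp only [map_mul]
    rw [div_mul_div_comm, Finset.sum_mul_sum]
    congr 1
    · refine Finset.sum_congr rfl fun k _ => Finset.sum_congr rfl fun j _ => ?_
      rw [hT]
      ring
    · rw [map_pow, Complex.conj_natCast]
  have key : ((∑ z ∈ cube d L, ‖phi Δ (y + z)‖ ^ 2 : ℝ) : ℂ)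
      = ((∑ k, ‖Δ k‖ ^ 2 : ℝ) : ℂ) / V := by
    push_cast
    calc ∑ z ∈ cube d L, ((‖phi Δ (y + z)‖ : ℝ) : ℂ) ^ 2
        = ∑ z ∈ cube d L, phi Δ (y + z) * (starRingEnd ℂ) (phi Δ (y + z)) := by
          refine Finset.sum_congr rfl fun z _ => ?_
          rw [← hsq]
          push_cast
          ring
      _ = ∑ z ∈ cube d L,
            (∑ k, ∑ j, Δ k * (starRingEnd ℂ) (Δ j) * (T k (y + z) * (starRingEnd ℂ) (T j (y + z)))) / (V * V) := by
          exact Finset.sum_congr rfl fun z _ => hphi (y + z)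
      _ = (∑ k, ∑ j, Δ k * (starRingEnd ℂ) (Δ j) *
            (if k = j then V else 0)) / (V * V) := by
          rw [← Finset.sum_div]
          congr 1
          rw [Finset.sum_comm]
          refine Finset.sum_congr rfl fun k _ => ?_
          rw [Finset.sum_comm]
          refine Finset.sum_congr rfl fun j _ => ?_
          rw [← Finset.mul_sum]
          congr 1
          calc ∑ z ∈ cube d L, T k (y + z) * (starRingEnd ℂ) (T j (y + z))
              = ∑ z ∈ cube d L, Complex.exp (2 * Real.pi * Complex.I *
                  (∑ i, ((k.1 i : ℂ) - (j.1 i : ℂ)) * ((y i : ℂ) + (z i : ℂ))) / L) := by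
                refine Finset.sum_congr rfl fun z _ => ?_
                rw [hTT]
                congr 3
                refine Finset.sum_congr rfl fun i _ => ?_
                simp only [Pi.add_apply]
                push_cast
                ring
            _ = if k = j then V else 0 := sum_exp_orth hL k j y
      _ = (∑ k, Δ k * (starRingEnd ℂ) (Δ k) * V) / (V * V) := by
          congr 1
          refine Finset.sum_congr rfl fun k _ => ?_
          rw [Finset.sum_eq_single k]
          · rw [if_pos rfl]
          · intro j _ hjk
            rw [if_neg (fun h => hjk h.symm), mul_zero]
          · intro h
            exact absurd (Finset.mem_univ k) h
      _ = (∑ k, ((‖Δ k‖ : ℝ) : ℂ) ^ 2) / V := by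
          have hc : ∀ k : Lat d L, Δ k * (starRingEnd ℂ) (Δ k) = ((‖Δ k‖ : ℝ) : ℂ) ^ 2 := by
            intro k
            rw [← hsq]
            push_cast
            ring
          simp_rw [hc]
          rw [← Finset.sum_mul, mul_div_mul_right _ _ hV0]
  have := key
  rw [hV] at this
  have h2 : ((∑ z ∈ cube d L, ‖phi Δ (y + z)‖ ^ 2 : ℝ) : ℂ)
      = (((∑ k, ‖Δ k‖ ^ 2) / (L : ℝ) ^ d : ℝ) : ℂ) := by
    rw [this]
    push_cast
    ring
  exact_mod_cast h2

lemma phi_sub (Φ Ψ : Lat d L → ℂ) (x : Fin d → ℤ) :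
    phi Φ x - phi Ψ x = phi (fun k => Φ k - Ψ k) x := by
  unfold phi
  rw [div_sub_div_same, ← Finset.sum_sub_distrib]
  congr 1
  exact Finset.sum_congr rfl fun k _ => by ring

lemma phi_neg (Φ : Lat d L → ℂ) (x : Fin d → ℤ) :
    phi (fun k => -Φ k) x = - phi Φ x := by
  unfold phi
  rw [← neg_div, ← Finset.sum_neg_distrib]
  congr 1
  exact Finset.sum_congr rfl fun k _ => by ring

lemma norm_prod_sub_prod (f g : ℕ → ℂ) : ∀ n : ℕ,
    ‖(∏ i ∈ Finset.range n, f i) - ∏ i ∈ Finset.range n, g i‖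
      ≤ ∑ i ∈ Finset.range n, (∏ j ∈ Finset.range i, ‖g j‖) * ‖f i - g i‖ *
          ∏ j ∈ Finset.Ico (i + 1) n, ‖f j‖
  | 0 => by simp
  | (n + 1) => by
    rw [Finset.prod_range_succ, Finset.prod_range_succ, Finset.sum_range_succ]
    have key : (∏ i ∈ Finset.range n, f i) * f n - (∏ i ∈ Finset.range n, g i) * g n
        = ((∏ i ∈ Finset.range n, f i) - ∏ i ∈ Finset.range n, g i) * f n
          + (∏ i ∈ Finset.range n, g i) * (f n - g n) := by ring
    rw [key]
    refine (norm_add_le _ _).trans ?_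
    rw [norm_mul, norm_mul, norm_prod]
    have IH := norm_prod_sub_prod f g n
    have h1 : ‖(∏ i ∈ Finset.range n, f i) - ∏ i ∈ Finset.range n, g i‖ * ‖f n‖
        ≤ (∑ i ∈ Finset.range n, (∏ j ∈ Finset.range i, ‖g j‖) * ‖f i - g i‖ *
            ∏ j ∈ Finset.Ico (i + 1) n, ‖f j‖) * ‖f n‖ :=
      mul_le_mul_of_nonneg_right IH (norm_nonneg _)
    refine le_trans (add_le_add_left h1 _) ?_
    rw [Finset.sum_mul]
    apply add_le_add
    · refine le_of_eq (Finset.sum_congr rfl fun i hi => ?_)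
      rw [Finset.mem_range] at hi
      rw [Finset.prod_Ico_succ_top (by omega : i + 1 ≤ n)]
      ring
    · refine le_of_eq ?_
      rw [Finset.Ico_self, Finset.prod_empty, mul_one]

lemma ennreal_sum_sqrt_le {α : Type*} (s : Finset α) (a : α → ENNReal) (ha : ∀ z ∈ s, a z ≠ ⊤) :
    ∑ z ∈ s, (a z) ^ ((1 : ℝ)/2) ≤ (s.card : ENNReal) ^ ((1 : ℝ)/2) * (∑ z ∈ s, a z) ^ ((1 : ℝ)/2) := by
  classical
  set b : α → ℝ := fun z => (a z).toReal with hb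
  have hb0 : ∀ z, 0 ≤ b z := fun z => ENNReal.toReal_nonneg
  have hbsum : 0 ≤ ∑ z ∈ s, b z := Finset.sum_nonneg fun z _ => hb0 z
  have hreal : ∑ z ∈ s, Real.sqrt (b z) ≤ Real.sqrt s.card * Real.sqrt (∑ z ∈ s, b z) := by
    have hcs := Finset.sum_mul_sq_le_sq_mul_sq s (fun _ => (1 : ℝ)) (fun z => Real.sqrt (b z))
    have h1 : (∑ z ∈ s, Real.sqrt (b z)) ^ 2 ≤ (s.card : ℝ) * ∑ z ∈ s, b z := by
      have hsq : ∀ z ∈ s, Real.sqrt (b z) ^ 2 = b z := fun z _ => Real.sq_sqrt (hb0 z)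
      calc (∑ z ∈ s, Real.sqrt (b z)) ^ 2
          = (∑ z ∈ s, 1 * Real.sqrt (b z)) ^ 2 := by simp
        _ ≤ (∑ z ∈ s, (1 : ℝ) ^ 2) * ∑ z ∈ s, Real.sqrt (b z) ^ 2 := hcs
        _ = (s.card : ℝ) * ∑ z ∈ s, b z := by
            rw [Finset.sum_congr rfl hsq]
            simp
    have h2 : 0 ≤ ∑ z ∈ s, Real.sqrt (b z) := Finset.sum_nonneg fun z _ => Real.sqrt_nonneg _
    have h3 : ∑ z ∈ s, Real.sqrt (b z) ≤ Real.sqrt ((s.card : ℝ) * ∑ z ∈ s, b z) :=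
      (Real.le_sqrt h2 (by positivity)).mpr h1
    rwa [Real.sqrt_mul (Nat.cast_nonneg _)] at h3
  have hlift : ∀ z ∈ s, (a z) ^ ((1 : ℝ)/2) = ENNReal.ofReal (Real.sqrt (b z)) := by
    intro z hz
    rw [Real.sqrt_eq_rpow, ← ENNReal.ofReal_rpow_of_nonneg (hb0 z) (by norm_num)]
    rw [hb, ENNReal.ofReal_toReal (ha z hz)]
  calc ∑ z ∈ s, (a z) ^ ((1 : ℝ)/2)
      = ∑ z ∈ s, ENNReal.ofReal (Real.sqrt (b z)) := Finset.sum_congr rfl hlift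
    _ = ENNReal.ofReal (∑ z ∈ s, Real.sqrt (b z)) :=
        (ENNReal.ofReal_sum_of_nonneg fun z _ => Real.sqrt_nonneg _).symm
    _ ≤ ENNReal.ofReal (Real.sqrt s.card * Real.sqrt (∑ z ∈ s, b z)) :=
        ENNReal.ofReal_le_ofReal hreal
    _ = ENNReal.ofReal (Real.sqrt s.card) * ENNReal.ofReal (Real.sqrt (∑ z ∈ s, b z)) :=
        ENNReal.ofReal_mul (Real.sqrt_nonneg _)
    _ = (s.card : ENNReal) ^ ((1 : ℝ)/2) * (∑ z ∈ s, a z) ^ ((1 : ℝ)/2) := by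
        congr 1
        · rw [Real.sqrt_eq_rpow, ← ENNReal.ofReal_rpow_of_nonneg (Nat.cast_nonneg _) (by norm_num)]
          rw [ENNReal.ofReal_natCast]
        · have hsa : (∑ z ∈ s, a z) = ENNReal.ofReal (∑ z ∈ s, b z) := by
            rw [ENNReal.ofReal_sum_of_nonneg (fun z _ => hb0 z)]
            exact Finset.sum_congr rfl fun z hz => (ENNReal.ofReal_toReal (ha z hz)).symm
          rw [hsa, Real.sqrt_eq_rpow, ← ENNReal.ofReal_rpow_of_nonneg hbsum (by norm_num)]

lemma prod_le_sum_pow {n : ℕ} (hn : 1 ≤ n) (t : Fin n → ℝ) (ht : ∀ i, 0 ≤ t i) :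
    ∏ i, t i ≤ ∑ i, (t i) ^ n / n := by
  have hn' : ((n : ℝ))⁻¹ * n = 1 := by
    field_simp
  have hn0 : (n : ℝ) ≠ 0 := Nat.cast_ne_zero.mpr (by omega)
  have hmain := Real.geom_mean_le_arith_mean_weighted Finset.univ (fun _ => (n : ℝ)⁻¹)
    (fun i => t i ^ n) (fun i _ => by positivity)
    (by rw [Finset.sum_const, Finset.card_univ, Fintype.card_fin, nsmul_eq_mul,
          mul_inv_cancel₀ hn0]) (fun i _ => pow_nonneg (ht i) n)
  calc ∏ i, t i = ∏ i, ((t i) ^ n) ^ ((n : ℝ)⁻¹) := by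
        refine Finset.prod_congr rfl fun i _ => ?_
        rw [← Real.rpow_natCast (t i) n, ← Real.rpow_mul (ht i), mul_comm, hn', Real.rpow_one]
    _ ≤ ∑ i, (n : ℝ)⁻¹ * t i ^ n := hmain
    _ = ∑ i, (t i) ^ n / n := by
        refine Finset.sum_congr rfl fun i _ => ?_
        rw [inv_mul_eq_div]

/-- Shift all sites of a monomial index by `z`. -/
def shiftI {n : ℕ} (I : Fin n → (Fin d → ℤ) × Bool) (z : Fin d → ℤ) :
    Fin n → (Fin d → ℤ) × Bool := fun i => ((I i).1 + z, (I i).2)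

lemma phiI_gauge {n : ℕ} (z : Fin d → ℤ) (Φ : Lat d L → ℂ) (I : Fin n → (Fin d → ℤ) × Bool) :
    phiI (fun k => Complex.exp ((tphase z k : ℂ) * Complex.I) * Φ k) I = phiI Φ (shiftI I z) := by
  unfold phiI shiftI
  refine Finset.prod_congr rfl fun i _ => ?_
  dsimp only
  rw [phi_gauge]

lemma integral_phiI_shift {μ : Measure (Lat d L → ℂ)} (hμ : GaugeInvariant μ) {n : ℕ}
    (I : Fin n → (Fin d → ℤ) × Bool) (z : Fin d → ℤ) :
    ∫ Φ, phiI Φ I ∂μ = ∫ Φ, phiI Φ (shiftI I z) ∂μ := by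
  rw [integral_gauge hμ (tphase z) (measurable_phiI I).aestronglyMeasurable]
  simp_rw [phiI_gauge]

lemma integral_phiI_one {μ : Measure (Lat d L → ℂ)} (hμ : GaugeInvariant μ)
    (I : Fin 1 → (Fin d → ℤ) × Bool) :
    ∫ Φ, phiI Φ I ∂μ = 0 := by
  have h := integral_gauge hμ (fun _ => Real.pi) (measurable_phiI I).aestronglyMeasurable
  have hneg : ∀ Φ : Lat d L → ℂ,
      phiI (fun k => Complex.exp (((Real.pi : ℝ) : ℂ) * Complex.I) * Φ k) I = - phiI Φ I := by
    intro Φ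
    unfold phiI
    rw [Fin.prod_univ_one, Fin.prod_univ_one, Complex.exp_pi_mul_I]
    have : (fun k : Lat d L => (-1 : ℂ) * Φ k) = fun k => -(Φ k) := by
      funext k; ring
    rw [this]
    by_cases hb : (I 0).2
    · simp [hb, phi_neg]
    · simp [hb, phi_neg]
  rw [funext hneg] at h
  rw [integral_neg] at h
  exact add_self_eq_zero.mp (by linear_combination h)

lemma integrable_pow_mono {μ : Measure (Lat d L → ℂ)} [IsProbabilityMeasure μ] {j m : ℕ}
    (hjm : j ≤ m) (y : Fin d → ℤ)
    (h : Integrable (fun Φ => ‖phi Φ y‖ ^ m) μ) :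
    Integrable (fun Φ => ‖phi Φ y‖ ^ j) μ := by
  refine Integrable.mono' ((integrable_const 1).add h)
    ((measurable_phi y).norm.pow_const j).aestronglyMeasurable ?_
  filter_upwards with Φ
  have h0 : (0 : ℝ) ≤ ‖phi Φ y‖ := norm_nonneg _
  have h0m : (0 : ℝ) ≤ ‖phi Φ y‖ ^ m := pow_nonneg h0 m
  rw [Real.norm_of_nonneg (pow_nonneg h0 j)]
  rcases le_or_gt ‖phi Φ y‖ 1 with h1 | h1
  · have := pow_le_one₀ h0 h1 (n := j)
    simp only [Pi.add_apply]
    linarith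
  · have := pow_le_pow_right₀ (le_of_lt h1) hjm
    simp only [Pi.add_apply]
    linarith

lemma integrable_moment_any {μ : Measure (Lat d L → ℂ)} (hμ : GaugeInvariant μ) (m : ℕ)
    (h : Integrable (fun Φ => ‖phi Φ 0‖ ^ m) μ) (y : Fin d → ℤ) :
    Integrable (fun Φ => ‖phi Φ y‖ ^ m) μ := by
  have := integrable_moment_shift hμ m 0 y h
  rwa [zero_add] at this

lemma norm_phiI (Φ : Lat d L → ℂ) {n : ℕ} (J : Fin n → (Fin d → ℤ) × Bool) :
    ‖phiI Φ J‖ = ∏ i, ‖phi Φ (J i).1‖ := by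
  unfold phiI
  rw [norm_prod]
  refine Finset.prod_congr rfl fun i _ => ?_
  by_cases hb : (J i).2 <;> simp [hb]

lemma integrable_phiI {μ : Measure (Lat d L → ℂ)} [IsProbabilityMeasure μ]
    (hμ : GaugeInvariant μ) {n : ℕ} (hn : 2 ≤ n)
    (hInt : Integrable (fun Φ => ‖phi Φ 0‖ ^ (2 * (n - 1))) μ)
    (J : Fin n → (Fin d → ℤ) × Bool) :
    Integrable (fun Φ => phiI Φ J) μ := by
  have hmom : ∀ y : Fin d → ℤ, Integrable (fun Φ => ‖phi Φ y‖ ^ n) μ := fun y =>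
    integrable_pow_mono (by omega) y (integrable_moment_any hμ _ hInt y)
  refine Integrable.mono'
    (integrable_finset_sum Finset.univ fun i _ => ((hmom (J i).1).div_const n))
    (measurable_phiI J).aestronglyMeasurable ?_
  filter_upwards with Φ
  rw [norm_phiI]
  exact prod_le_sum_pow (by omega) _ (fun i => norm_nonneg _)

lemma integrable_fst {X : Type*} [MeasurableSpace X] {γ : Measure (X × X)} {μ ν : Measure X}
    (h : IsCoupling γ μ ν) {E : Type*} [NormedAddCommGroup E] {f : X → E}
    (hf : Integrable f μ) : Integrable (fun p : X × X => f p.1) γ := by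
  have h1 : Integrable f (γ.map Prod.fst) := by rw [h.1]; exact hf
  exact (integrable_map_measure (by rw [h.1]; exact hf.1) measurable_fst.aemeasurable).mp h1

lemma integrable_snd {X : Type*} [MeasurableSpace X] {γ : Measure (X × X)} {μ ν : Measure X}
    (h : IsCoupling γ μ ν) {E : Type*} [NormedAddCommGroup E] {f : X → E}
    (hf : Integrable f ν) : Integrable (fun p : X × X => f p.2) γ := by
  have h1 : Integrable f (γ.map Prod.snd) := by rw [h.2]; exact hf
  exact (integrable_map_measure (by rw [h.2]; exact hf.1) measurable_snd.aemeasurable).mp h1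

lemma integral_fst {X : Type*} [MeasurableSpace X] {γ : Measure (X × X)} {μ ν : Measure X}
    (h : IsCoupling γ μ ν) {f : X → ℂ} (hf : AEStronglyMeasurable f μ) :
    ∫ p, f p.1 ∂γ = ∫ Φ, f Φ ∂μ := by
  rw [← h.1]
  exact (integral_map measurable_fst.aemeasurable (by rwa [h.1])).symm

lemma integral_snd {X : Type*} [MeasurableSpace X] {γ : Measure (X × X)} {μ ν : Measure X}
    (h : IsCoupling γ μ ν) {f : X → ℂ} (hf : AEStronglyMeasurable f ν) :
    ∫ p, f p.2 ∂γ = ∫ Φ, f Φ ∂ν := by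
  rw [← h.2]
  exact (integral_map measurable_snd.aemeasurable (by rwa [h.2])).symm

lemma lintegral_fst {X : Type*} [MeasurableSpace X] {γ : Measure (X × X)} {μ ν : Measure X}
    (h : IsCoupling γ μ ν) {f : X → ENNReal} (hf : Measurable f) :
    ∫⁻ p, f p.1 ∂γ = ∫⁻ Φ, f Φ ∂μ := by
  rw [← h.1, lintegral_map hf measurable_fst]

lemma lintegral_snd {X : Type*} [MeasurableSpace X] {γ : Measure (X × X)} {μ ν : Measure X}
    (h : IsCoupling γ μ ν) {f : X → ENNReal} (hf : Measurable f) :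
    ∫⁻ p, f p.2 ∂γ = ∫⁻ Φ, f Φ ∂ν := by
  rw [← h.2, lintegral_map hf measurable_snd]

lemma fieldDistSq_nonneg (Φ Ψ : Lat d L → ℂ) : 0 ≤ fieldDistSq Φ Ψ := by
  unfold fieldDistSq
  positivity

lemma measurable_fieldDistSq :
    Measurable (fun p : (Lat d L → ℂ) × (Lat d L → ℂ) => fieldDistSq p.1 p.2) := by
  unfold fieldDistSq
  refine Measurable.div_const (Finset.measurable_sum _ fun k _ => ?_) _
  exact (((measurable_pi_apply k).comp measurable_fst).sub
    ((measurable_pi_apply k).comp measurable_snd)).norm.pow_const 2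

lemma sum_sq_diff (hL : 2 ≤ L) (Φ Ψ : Lat d L → ℂ) (y : Fin d → ℤ) :
    ∑ z ∈ cube d L, ‖phi Φ (y + z) - phi Ψ (y + z)‖ ^ 2 = fieldDistSq Φ Ψ := by
  have h := parseval hL (fun k => Φ k - Ψ k) y
  simp only [← phi_sub] at h
  rw [h]
  rfl

lemma integrable_fieldDistSq (hL : 2 ≤ L)
    {μ μ' : Measure (Lat d L → ℂ)} [IsProbabilityMeasure μ] [IsProbabilityMeasure μ']
    (hμ : GaugeInvariant μ) (hμ' : GaugeInvariant μ') {n : ℕ} (hn : 2 ≤ n)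
    (hIμ : Integrable (fun Φ => ‖phi Φ 0‖ ^ (2 * (n - 1))) μ)
    (hIμ' : Integrable (fun Φ => ‖phi Φ 0‖ ^ (2 * (n - 1))) μ')
    {γ : Measure ((Lat d L → ℂ) × (Lat d L → ℂ))} (hγ : IsCoupling γ μ μ') :
    Integrable (fun p => fieldDistSq p.1 p.2) γ := by
  have h1 : ∀ y, Integrable (fun p : (Lat d L → ℂ) × (Lat d L → ℂ) => ‖phi p.1 y‖ ^ 2) γ :=
    fun y => integrable_fst hγ
      (integrable_pow_mono (by omega) y (integrable_moment_any hμ _ hIμ y))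
  have h2 : ∀ y, Integrable (fun p : (Lat d L → ℂ) × (Lat d L → ℂ) => ‖phi p.2 y‖ ^ 2) γ :=
    fun y => integrable_snd hγ
      (integrable_pow_mono (by omega) y (integrable_moment_any hμ' _ hIμ' y))
  refine Integrable.mono'
    (integrable_finset_sum (cube d L) fun z _ =>
      (((h1 ((0 : Fin d → ℤ) + z)).const_mul 2).add ((h2 ((0 : Fin d → ℤ) + z)).const_mul 2)))
    measurable_fieldDistSq.aestronglyMeasurable ?_
  filter_upwards with p
  rw [Real.norm_of_nonneg (fieldDistSq_nonneg _ _), ← sum_sq_diff hL p.1 p.2 0]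
  refine Finset.sum_le_sum fun z _ => ?_
  have ha : (0:ℝ) ≤ ‖phi p.1 (0 + z)‖ := norm_nonneg _
  have hb : (0:ℝ) ≤ ‖phi p.2 (0 + z)‖ := norm_nonneg _
  have htr : ‖phi p.1 (0 + z) - phi p.2 (0 + z)‖ ≤ ‖phi p.1 (0 + z)‖ + ‖phi p.2 (0 + z)‖ :=
    norm_sub_le _ _
  have hsq : ‖phi p.1 (0 + z) - phi p.2 (0 + z)‖ ^ 2
      ≤ (‖phi p.1 (0 + z)‖ + ‖phi p.2 (0 + z)‖) ^ 2 :=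
    pow_le_pow_left₀ (norm_nonneg _) htr 2
  simp only [Pi.add_apply]
  nlinarith [sq_nonneg (‖phi p.1 (0 + z)‖ - ‖phi p.2 (0 + z)‖)]

lemma ofReal_pow_rpow (t : ℝ) (ht : 0 ≤ t) {m : ℕ} (hm : m ≠ 0) :
    (ENNReal.ofReal (t ^ m)) ^ (((m : ℝ))⁻¹) = ENNReal.ofReal t := by
  rw [← Real.rpow_natCast t m, ← ENNReal.ofReal_rpow_of_nonneg ht (Nat.cast_nonneg m),
    ← ENNReal.rpow_mul, mul_inv_cancel₀ (Nat.cast_ne_zero.mpr hm), ENNReal.rpow_one]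

lemma lintegral_moment_eq {μ : Measure (Lat d L → ℂ)} (hμ : GaugeInvariant μ) {n : ℕ}
    (hn : 2 ≤ n) (hInt : Integrable (fun Φ => ‖phi Φ 0‖ ^ (2 * (n - 1))) μ) (y : Fin d → ℤ) :
    ∫⁻ Φ, ENNReal.ofReal (‖phi Φ y‖ ^ (2 * (n - 1))) ∂μ
      = ENNReal.ofReal (Amom μ n 0 ^ (2 * (n - 1))) := by
  have hshift := lintegral_moment_shift hμ (2 * (n - 1)) 0 y
  rw [zero_add] at hshift
  rw [hshift]
  rw [← MeasureTheory.ofReal_integral_eq_lintegral_ofReal hInt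
    (Filter.Eventually.of_forall fun Φ => pow_nonneg (norm_nonneg _) _)]
  congr 1
  set T := ∫ Φ, ‖phi Φ (0 : Fin d → ℤ)‖ ^ (2 * (n - 1)) ∂μ with hT
  have hT0 : 0 ≤ T := integral_nonneg fun Φ => pow_nonneg (norm_nonneg _) _
  have hr : ((2 * (n - 1) : ℕ) : ℝ) = 2 * ((n : ℝ) - 1) := by
    push_cast [Nat.cast_sub (by omega : 1 ≤ n)]
    ring
  have hrne : (2 * ((n : ℝ) - 1)) ≠ 0 := by
    have : (2 : ℝ) ≤ (n : ℝ) := by exact_mod_cast hn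
    intro hc
    nlinarith
  unfold Amom
  rw [← hT]
  rw [← Real.rpow_natCast (T ^ (2 * ((n : ℝ) - 1))⁻¹) (2 * (n - 1)), hr]
  rw [← Real.rpow_mul hT0, inv_mul_cancel₀ hrne, Real.rpow_one]

lemma main_bound (hd : 1 ≤ d) (hL : 2 ≤ L)
    {μ μ' : Measure (Lat d L → ℂ)} [IsProbabilityMeasure μ] [IsProbabilityMeasure μ']
    (hμ : GaugeInvariant μ) (hμ' : GaugeInvariant μ') {n : ℕ} (hn : 2 ≤ n)
    (hIμ : Integrable (fun Φ => ‖phi Φ 0‖ ^ (2 * (n - 1))) μ)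
    (hIμ' : Integrable (fun Φ => ‖phi Φ 0‖ ^ (2 * (n - 1))) μ')
    (I : Fin n → (Fin d → ℤ) × Bool)
    (γ : Measure ((Lat d L → ℂ) × (Lat d L → ℂ))) [IsProbabilityMeasure γ]
    (hγ : IsCoupling γ μ μ') :
    ‖(∫ Φ, phiI Φ I ∂μ) - ∫ Φ, phiI Φ I ∂μ'‖ ≤
      Amax μ μ' n (fun _ => 0) ^ (n - 1) * n *
        Real.sqrt (∫ p, fieldDistSq p.1 p.2 ∂γ) / (L : ℝ) ^ ((d : ℝ) / 2) := by
  classical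
  set m : ℕ := 2 * (n - 1) with hm
  have hm0 : m ≠ 0 := by omega
  have hmr : ((m : ℕ) : ℝ) = 2 * ((n : ℝ) - 1) := by
    rw [hm]
    push_cast [Nat.cast_sub (by omega : 1 ≤ n)]
    ring
  have hn1r : (1 : ℝ) ≤ (n : ℝ) - 1 := by
    have : (2 : ℝ) ≤ (n : ℝ) := by exact_mod_cast hn
    linarith
  set A : ℝ := Amax μ μ' n (fun _ => 0) with hA
  have hAmom0 : 0 ≤ Amom μ n (fun _ => 0) :=
    Real.rpow_nonneg (integral_nonneg fun _ => pow_nonneg (norm_nonneg _) _) _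
  have hAmom0' : 0 ≤ Amom μ' n (fun _ => 0) :=
    Real.rpow_nonneg (integral_nonneg fun _ => pow_nonneg (norm_nonneg _) _) _
  have hA0 : 0 ≤ A := le_trans hAmom0 (le_max_left _ _)
  set C : ℝ := ∫ p, fieldDistSq p.1 p.2 ∂γ with hC
  have hC0 : 0 ≤ C := integral_nonneg fun p => fieldDistSq_nonneg _ _
  have hfds : Integrable (fun p => fieldDistSq p.1 p.2) γ :=
    integrable_fieldDistSq hL hμ hμ' hn hIμ hIμ' hγ
  have hzero : ((fun _ => 0 : Fin d → ℤ)) = (0 : Fin d → ℤ) := rfl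
  -- site and conjugation data as functions on ℕ
  set s : ℕ → (Fin d → ℤ) := fun j => if h : j < n then (I ⟨j, h⟩).1 else 0 with hs
  set bI : ℕ → Bool := fun j => if h : j < n then (I ⟨j, h⟩).2 else true with hbI
  -- step 1 : coupling representation of the difference, for each shift z
  have hint1 : ∀ z : Fin d → ℤ, Integrable (fun Φ => phiI Φ (shiftI I z)) μ :=
    fun z => integrable_phiI hμ hn hIμ _
  have hint2 : ∀ z : Fin d → ℤ, Integrable (fun Φ => phiI Φ (shiftI I z)) μ' :=
    fun z => integrable_phiI hμ' hn hIμ' _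
  have hsplit : ∀ z : Fin d → ℤ,
      (∫ Φ, phiI Φ I ∂μ) - ∫ Φ, phiI Φ I ∂μ'
        = ∫ p, (phiI p.1 (shiftI I z) - phiI p.2 (shiftI I z)) ∂γ := by
    intro z
    rw [integral_phiI_shift hμ I z, integral_phiI_shift hμ' I z,
      ← integral_fst hγ (hint1 z).aestronglyMeasurable,
      ← integral_snd hγ (hint2 z).aestronglyMeasurable,
      ← integral_sub (integrable_fst hγ (hint1 z)) (integrable_snd hγ (hint2 z))]
  have hdiffint : ∀ z : Fin d → ℤ,
      Integrable (fun p => phiI p.1 (shiftI I z) - phiI p.2 (shiftI I z)) γ :=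
    fun z => (integrable_fst hγ (hint1 z)).sub (integrable_snd hγ (hint2 z))
  -- step 2 : averaging over shifts
  have hcard : (cube d L).card = L ^ d := card_cube (by omega)
  have hL0 : (0 : ℝ) < (L : ℝ) := by
    exact_mod_cast Nat.pos_of_ne_zero (by omega)
  have hVpos : (0 : ℝ) < (L : ℝ) ^ d := by positivity
  have hDsum : ((L : ℝ) ^ d) * ‖(∫ Φ, phiI Φ I ∂μ) - ∫ Φ, phiI Φ I ∂μ'‖
      ≤ ∑ z ∈ cube d L, ∫ p, ‖phiI p.1 (shiftI I z) - phiI p.2 (shiftI I z)‖ ∂γ := by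
    calc ((L : ℝ) ^ d) * ‖(∫ Φ, phiI Φ I ∂μ) - ∫ Φ, phiI Φ I ∂μ'‖
        = ∑ _z ∈ cube d L, ‖(∫ Φ, phiI Φ I ∂μ) - ∫ Φ, phiI Φ I ∂μ'‖ := by
          rw [Finset.sum_const, hcard, nsmul_eq_mul]
          push_cast
          ring
      _ ≤ _ := by
          refine Finset.sum_le_sum fun z _ => ?_
          rw [hsplit z]
          exact norm_integral_le_integral_norm _
  -- ENNReal setup
  set e : ℕ → ℕ → ℝ := fun i j => if j = i then (1 : ℝ)/2 else (m : ℝ)⁻¹ with he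
  have he0 : ∀ i j, 0 ≤ e i j := by
    intro i j
    simp only [he]
    split_ifs
    · norm_num
    · positivity
  set F : (Fin d → ℤ) → ℕ → ℕ → ((Lat d L → ℂ) × (Lat d L → ℂ)) → ENNReal := fun z i j p =>
    if j = i then ENNReal.ofReal (‖phi p.1 (s j + z) - phi p.2 (s j + z)‖ ^ 2)
    else if j < i then ENNReal.ofReal (‖phi p.2 (s j + z)‖ ^ m)
    else ENNReal.ofReal (‖phi p.1 (s j + z)‖ ^ m) with hF
  have hmeasF : ∀ z i j, Measurable (F z i j) := by
    intro z i j
    simp only [hF]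
    have h1 : Measurable fun p : (Lat d L → ℂ) × (Lat d L → ℂ) =>
        ENNReal.ofReal (‖phi p.1 (s j + z) - phi p.2 (s j + z)‖ ^ 2) :=
      ((((measurable_phi (s j + z)).comp measurable_fst).sub
        ((measurable_phi (s j + z)).comp measurable_snd)).norm.pow_const 2).ennreal_ofReal
    have h2 : Measurable fun p : (Lat d L → ℂ) × (Lat d L → ℂ) =>
        ENNReal.ofReal (‖phi p.2 (s j + z)‖ ^ m) :=
      (((measurable_phi (s j + z)).comp measurable_snd).norm.pow_const m).ennreal_ofReal
    have h3 : Measurable fun p : (Lat d L → ℂ) × (Lat d L → ℂ) =>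
        ENNReal.ofReal (‖phi p.1 (s j + z)‖ ^ m) :=
      (((measurable_phi (s j + z)).comp measurable_fst).norm.pow_const m).ennreal_ofReal
    split_ifs <;> assumption
  -- pointwise telescoping estimate
  have hpoint : ∀ (z : Fin d → ℤ) (p : (Lat d L → ℂ) × (Lat d L → ℂ)),
      ENNReal.ofReal ‖phiI p.1 (shiftI I z) - phiI p.2 (shiftI I z)‖
        ≤ ∑ i ∈ Finset.range n, ∏ j ∈ Finset.range n, (F z i j p) ^ (e i j) := by
    intro z p
    set fa : ℕ → ℂ := fun j =>
      if bI j then phi p.1 (s j + z) else (starRingEnd ℂ) (phi p.1 (s j + z)) with hfa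
    set fb : ℕ → ℂ := fun j =>
      if bI j then phi p.2 (s j + z) else (starRingEnd ℂ) (phi p.2 (s j + z)) with hfb
    have hfa1 : phiI p.1 (shiftI I z) = ∏ j ∈ Finset.range n, fa j := by
      rw [← Fin.prod_univ_eq_prod_range]
      unfold phiI shiftI
      refine Finset.prod_congr rfl fun i _ => ?_
      have hi : (i : ℕ) < n := i.isLt
      simp only [hfa, hs, hbI, dif_pos hi, Fin.eta]
    have hfb1 : phiI p.2 (shiftI I z) = ∏ j ∈ Finset.range n, fb j := by
      rw [← Fin.prod_univ_eq_prod_range]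
      unfold phiI shiftI
      refine Finset.prod_congr rfl fun i _ => ?_
      have hi : (i : ℕ) < n := i.isLt
      simp only [hfb, hs, hbI, dif_pos hi, Fin.eta]
    have hnfa : ∀ j, ‖fa j‖ = ‖phi p.1 (s j + z)‖ := by
      intro j
      simp only [hfa]
      by_cases hb : bI j <;> simp [hb]
    have hnfb : ∀ j, ‖fb j‖ = ‖phi p.2 (s j + z)‖ := by
      intro j
      simp only [hfb]
      by_cases hb : bI j <;> simp [hb]
    have hndiff : ∀ j, ‖fa j - fb j‖ = ‖phi p.1 (s j + z) - phi p.2 (s j + z)‖ := by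
      intro j
      simp only [hfa, hfb]
      by_cases hb : bI j
      · simp [hb]
      · simp only [hb, if_false, Bool.false_eq_true, ← map_sub]
        exact Complex.norm_conj _
    have htel := norm_prod_sub_prod fa fb n
    rw [hfa1, hfb1]
    refine le_trans (ENNReal.ofReal_le_ofReal htel) ?_
    rw [ENNReal.ofReal_sum_of_nonneg (fun i _ => by positivity)]
    refine Finset.sum_le_sum fun i hi => ?_
    rw [Finset.mem_range] at hi
    -- identify the i-th term with the Hölder-ready product
    refine le_of_eq ?_
    have hsplitprod : ∏ j ∈ Finset.range n, (F z i j p) ^ (e i j)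
        = (∏ j ∈ Finset.range i, (F z i j p) ^ (e i j)) *
          ((F z i i p) ^ (e i i) * ∏ j ∈ Finset.Ico (i+1) n, (F z i j p) ^ (e i j)) := by
      rw [Finset.range_eq_Ico, ← Finset.prod_Ico_consecutive _ (Nat.zero_le i) (le_of_lt hi),
        Finset.prod_eq_prod_Ico_succ_bot hi, ← Finset.range_eq_Ico]
    rw [hsplitprod]
    have hterm1 : ∏ j ∈ Finset.range i, (F z i j p) ^ (e i j)
        = ENNReal.ofReal (∏ j ∈ Finset.range i, ‖fb j‖) := by
      rw [ENNReal.ofReal_prod_of_nonneg (fun j _ => norm_nonneg _)]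
      refine Finset.prod_congr rfl fun j hj => ?_
      rw [Finset.mem_range] at hj
      have hji : j ≠ i := by omega
      simp only [hF, he, if_neg hji, if_pos hj]
      rw [hnfb j]
      exact ofReal_pow_rpow _ (norm_nonneg _) hm0
    have hterm2 : (F z i i p) ^ (e i i)
        = ENNReal.ofReal ‖fa i - fb i‖ := by
      simp only [hF, he, if_pos rfl]
      rw [hndiff i]
      have h2 : (1 : ℝ)/2 = (((2 : ℕ) : ℝ))⁻¹ := by norm_num
      rw [h2]
      exact ofReal_pow_rpow _ (norm_nonneg _) two_ne_zero
    have hterm3 : ∏ j ∈ Finset.Ico (i+1) n, (F z i j p) ^ (e i j)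
        = ENNReal.ofReal (∏ j ∈ Finset.Ico (i+1) n, ‖fa j‖) := by
      rw [ENNReal.ofReal_prod_of_nonneg (fun j _ => norm_nonneg _)]
      refine Finset.prod_congr rfl fun j hj => ?_
      rw [Finset.mem_Ico] at hj
      have hji : j ≠ i := by omega
      have hji' : ¬ (j < i) := by omega
      simp only [hF, he, if_neg hji, if_neg hji']
      rw [hnfa j]
      exact ofReal_pow_rpow _ (norm_nonneg _) hm0
    rw [hterm1, hterm2, hterm3,
      ENNReal.ofReal_mul (mul_nonneg (Finset.prod_nonneg fun j _ => norm_nonneg _)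
        (norm_nonneg _)),
      ENNReal.ofReal_mul (Finset.prod_nonneg fun j _ => norm_nonneg _), mul_assoc]
  -- Hölder exponent sum
  have hesum : ∀ i ∈ Finset.range n, ∑ j ∈ Finset.range n, e i j = 1 := by
    intro i hi
    rw [Finset.sum_eq_sum_sdiff_singleton_add hi]
    have h1 : ∀ j ∈ Finset.range n \ {i}, e i j = (m : ℝ)⁻¹ := by
      intro j hj
      rw [Finset.mem_sdiff, Finset.mem_singleton] at hj
      simp only [he, if_neg hj.2]
    rw [Finset.sum_congr rfl h1, Finset.sum_const, Finset.card_sdiff_of_subset (by simpa using hi),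
      Finset.card_range, Finset.card_singleton]
    simp only [he, if_pos rfl]
    rw [nsmul_eq_mul]
    have hcast : ((n - 1 : ℕ) : ℝ) = (n : ℝ) - 1 := by
      push_cast [Nat.cast_sub (by omega : 1 ≤ n)]
      ring
    rw [hcast, hmr]
    have hne : (n : ℝ) - 1 ≠ 0 := by linarith
    field_simp
    ring
  -- Hölder
  have hHolder : ∀ (z : Fin d → ℤ), ∀ i ∈ Finset.range n,
      ∫⁻ p, ∏ j ∈ Finset.range n, (F z i j p) ^ (e i j) ∂γ
        ≤ ∏ j ∈ Finset.range n, (∫⁻ p, F z i j p ∂γ) ^ (e i j) :=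
    fun z i hi => ENNReal.lintegral_prod_norm_pow_le _
      (fun j _ => (hmeasF z i j).aemeasurable) (hesum i hi) (fun j _ => he0 i j)
  -- bounding the off-diagonal factors
  have hFoff : ∀ (z : Fin d → ℤ) (i j : ℕ), j ≠ i →
      (∫⁻ p, F z i j p ∂γ) ^ (e i j) ≤ ENNReal.ofReal A := by
    intro z i j hji
    have hej : e i j = (m : ℝ)⁻¹ := by simp only [he, if_neg hji]
    by_cases hlt : j < i
    · have hval : ∫⁻ p, F z i j p ∂γ = ENNReal.ofReal (Amom μ' n 0 ^ m) := by
        have hFe : F z i j = fun p => ENNReal.ofReal (‖phi p.2 (s j + z)‖ ^ m) := by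
          funext p
          simp only [hF, if_neg hji, if_pos hlt]
        rw [hFe, lintegral_snd hγ ((measurable_phi _).norm.pow_const m).ennreal_ofReal,
          lintegral_moment_eq hμ' hn hIμ' _]
      rw [hval, hej, ofReal_pow_rpow (Amom μ' n 0) (by exact hAmom0') hm0]
      exact ENNReal.ofReal_le_ofReal (le_max_right _ _)
    · have hval : ∫⁻ p, F z i j p ∂γ = ENNReal.ofReal (Amom μ n 0 ^ m) := by
        have hFe : F z i j = fun p => ENNReal.ofReal (‖phi p.1 (s j + z)‖ ^ m) := by
          funext p
          simp only [hF, if_neg hji, if_neg hlt]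
        rw [hFe, lintegral_fst hγ ((measurable_phi _).norm.pow_const m).ennreal_ofReal,
          lintegral_moment_eq hμ hn hIμ _]
      rw [hval, hej, ofReal_pow_rpow (Amom μ n 0) (by exact hAmom0) hm0]
      exact ENNReal.ofReal_le_ofReal (le_max_left _ _)
  -- diagonal factor
  set c : ℕ → (Fin d → ℤ) → ENNReal := fun i z =>
    ∫⁻ p, ENNReal.ofReal (‖phi p.1 (s i + z) - phi p.2 (s i + z)‖ ^ 2) ∂γ with hc
  have hprodbound : ∀ (z : Fin d → ℤ), ∀ i ∈ Finset.range n,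
      ∏ j ∈ Finset.range n, (∫⁻ p, F z i j p ∂γ) ^ (e i j)
        ≤ ENNReal.ofReal A ^ (n - 1) * (c i z) ^ ((1 : ℝ)/2) := by
    intro z i hi
    rw [Finset.prod_eq_prod_diff_singleton_mul hi]
    have h2 : (∫⁻ p, F z i i p ∂γ) ^ (e i i) = (c i z) ^ ((1 : ℝ)/2) := by
      have hFe : F z i i = fun p =>
          ENNReal.ofReal (‖phi p.1 (s i + z) - phi p.2 (s i + z)‖ ^ 2) := by
        funext p
        simp only [hF, if_pos rfl]
      simp only [he, if_pos rfl, hFe, hc]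
    refine mul_le_mul' ?_ (le_of_eq h2)
    calc ∏ j ∈ Finset.range n \ {i}, (∫⁻ p, F z i j p ∂γ) ^ (e i j)
        ≤ ∏ _j ∈ Finset.range n \ {i}, ENNReal.ofReal A :=
          Finset.prod_le_prod' fun j hj => hFoff z i j
            (by rw [Finset.mem_sdiff, Finset.mem_singleton] at hj; exact hj.2)
      _ = ENNReal.ofReal A ^ (n - 1) := by
          rw [Finset.prod_const, Finset.card_sdiff_of_subset (by simpa using hi), Finset.card_range,
            Finset.card_singleton]
  -- summing the diagonal factors over shifts : Parseval
  have hcsum : ∀ i : ℕ, ∑ z ∈ cube d L, c i z = ENNReal.ofReal C := by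
    intro i
    have hmeas : ∀ z : Fin d → ℤ, Measurable fun p : (Lat d L → ℂ) × (Lat d L → ℂ) =>
        ENNReal.ofReal (‖phi p.1 (s i + z) - phi p.2 (s i + z)‖ ^ 2) := fun z =>
      ((((measurable_phi (s i + z)).comp measurable_fst).sub
        ((measurable_phi (s i + z)).comp measurable_snd)).norm.pow_const 2).ennreal_ofReal
    simp only [hc]
    rw [← lintegral_finset_sum _ (fun z _ => hmeas z)]
    have hpt : ∀ p : (Lat d L → ℂ) × (Lat d L → ℂ),
        ∑ z ∈ cube d L, ENNReal.ofReal (‖phi p.1 (s i + z) - phi p.2 (s i + z)‖ ^ 2)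
          = ENNReal.ofReal (fieldDistSq p.1 p.2) := by
      intro p
      rw [← ENNReal.ofReal_sum_of_nonneg (fun z _ => by positivity)]
      congr 1
      exact sum_sq_diff hL p.1 p.2 (s i)
    rw [lintegral_congr hpt]
    rw [← MeasureTheory.ofReal_integral_eq_lintegral_ofReal hfds
      (Filter.Eventually.of_forall fun p => fieldDistSq_nonneg _ _)]
  have hcfin : ∀ i : ℕ, ∀ z ∈ cube d L, c i z ≠ ⊤ := by
    intro i z hz
    have hle : c i z ≤ ENNReal.ofReal C := by
      rw [← hcsum i]
      exact Finset.single_le_sum (fun _ _ => zero_le) hz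
    exact ne_top_of_le_ne_top ENNReal.ofReal_ne_top hle
  -- the main ENNReal chain
  have hENN : ENNReal.ofReal
      (∑ z ∈ cube d L, ∫ p, ‖phiI p.1 (shiftI I z) - phiI p.2 (shiftI I z)‖ ∂γ)
      ≤ ENNReal.ofReal (A ^ (n - 1) * n * Real.sqrt C * Real.sqrt ((L : ℝ) ^ d)) := by
    rw [ENNReal.ofReal_sum_of_nonneg (fun z _ => integral_nonneg fun p => norm_nonneg _)]
    have hstep1 : ∀ z ∈ cube d L,
        ENNReal.ofReal (∫ p, ‖phiI p.1 (shiftI I z) - phiI p.2 (shiftI I z)‖ ∂γ)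
          ≤ ∑ i ∈ Finset.range n, ENNReal.ofReal A ^ (n - 1) * (c i z) ^ ((1 : ℝ)/2) := by
      intro z _
      rw [MeasureTheory.ofReal_integral_eq_lintegral_ofReal (hdiffint z).norm
        (Filter.Eventually.of_forall fun p => norm_nonneg _)]
      calc ∫⁻ p, ENNReal.ofReal ‖phiI p.1 (shiftI I z) - phiI p.2 (shiftI I z)‖ ∂γ
          ≤ ∫⁻ p, ∑ i ∈ Finset.range n, ∏ j ∈ Finset.range n, (F z i j p) ^ (e i j) ∂γ :=
            lintegral_mono (hpoint z)
        _ = ∑ i ∈ Finset.range n, ∫⁻ p, ∏ j ∈ Finset.range n, (F z i j p) ^ (e i j) ∂γ :=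
            lintegral_finset_sum _
              (fun i _ => Finset.measurable_prod _ fun j _ => (hmeasF z i j).pow_const _)
        _ ≤ ∑ i ∈ Finset.range n, ∏ j ∈ Finset.range n, (∫⁻ p, F z i j p ∂γ) ^ (e i j) :=
            Finset.sum_le_sum (fun i hi => hHolder z i hi)
        _ ≤ ∑ i ∈ Finset.range n, ENNReal.ofReal A ^ (n - 1) * (c i z) ^ ((1 : ℝ)/2) :=
            Finset.sum_le_sum (fun i hi => hprodbound z i hi)
    calc ∑ z ∈ cube d L,
            ENNReal.ofReal (∫ p, ‖phiI p.1 (shiftI I z) - phiI p.2 (shiftI I z)‖ ∂γ)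
        ≤ ∑ z ∈ cube d L, ∑ i ∈ Finset.range n,
            ENNReal.ofReal A ^ (n - 1) * (c i z) ^ ((1 : ℝ)/2) := Finset.sum_le_sum hstep1
      _ = ∑ i ∈ Finset.range n, ENNReal.ofReal A ^ (n - 1) *
            ∑ z ∈ cube d L, (c i z) ^ ((1 : ℝ)/2) := by
          rw [Finset.sum_comm]
          exact Finset.sum_congr rfl fun i _ => by rw [Finset.mul_sum]
      _ ≤ ∑ _i ∈ Finset.range n, ENNReal.ofReal A ^ (n - 1) *
            (((cube d L).card : ENNReal) ^ ((1 : ℝ)/2) * (ENNReal.ofReal C) ^ ((1 : ℝ)/2)) := by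
          refine Finset.sum_le_sum fun i _ => mul_le_mul' le_rfl ?_
          have h := ennreal_sum_sqrt_le (cube d L) (c i) (hcfin i)
          rwa [hcsum i] at h
      _ = ENNReal.ofReal (A ^ (n - 1) * n * Real.sqrt C * Real.sqrt ((L : ℝ) ^ d)) := by
          rw [Finset.sum_const, Finset.card_range, hcard, nsmul_eq_mul]
          have hA' : ENNReal.ofReal A ^ (n - 1) = ENNReal.ofReal (A ^ (n - 1)) :=
            (ENNReal.ofReal_pow hA0 _).symm
          have hCs : (ENNReal.ofReal C) ^ ((1 : ℝ)/2) = ENNReal.ofReal (Real.sqrt C) := by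
            rw [Real.sqrt_eq_rpow, ← ENNReal.ofReal_rpow_of_nonneg hC0 (by norm_num)]
          have hVs : (((L ^ d : ℕ) : ENNReal)) ^ ((1 : ℝ)/2)
              = ENNReal.ofReal (Real.sqrt ((L : ℝ) ^ d)) := by
            rw [← ENNReal.ofReal_natCast (L ^ d), Real.sqrt_eq_rpow,
              ← ENNReal.ofReal_rpow_of_nonneg (by positivity) (by norm_num)]
            congr 2
            push_cast
            ring
          rw [hA', hCs, hVs, ← ENNReal.ofReal_natCast n,
            ← ENNReal.ofReal_mul (Real.sqrt_nonneg _),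
            ← ENNReal.ofReal_mul (pow_nonneg hA0 _),
            ← ENNReal.ofReal_mul (Nat.cast_nonneg n)]
          congr 1
          ring
  have hT' : ∑ z ∈ cube d L, ∫ p, ‖phiI p.1 (shiftI I z) - phiI p.2 (shiftI I z)‖ ∂γ
      ≤ A ^ (n - 1) * n * Real.sqrt C * Real.sqrt ((L : ℝ) ^ d) :=
    (ENNReal.ofReal_le_ofReal_iff (by positivity)).mp hENN
  have hfinal : ‖(∫ Φ, phiI Φ I ∂μ) - ∫ Φ, phiI Φ I ∂μ'‖
      ≤ A ^ (n - 1) * n * Real.sqrt C * Real.sqrt ((L : ℝ) ^ d) / ((L : ℝ) ^ d) := by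
    rw [le_div_iff₀ hVpos]
    calc ‖(∫ Φ, phiI Φ I ∂μ) - ∫ Φ, phiI Φ I ∂μ'‖ * (L : ℝ) ^ d
        = (L : ℝ) ^ d * ‖(∫ Φ, phiI Φ I ∂μ) - ∫ Φ, phiI Φ I ∂μ'‖ := by ring
      _ ≤ _ := le_trans hDsum hT'
  have hsqid : Real.sqrt ((L : ℝ) ^ d) = (L : ℝ) ^ ((d : ℝ)/2) := by
    rw [Real.sqrt_eq_rpow, ← Real.rpow_natCast (L : ℝ) d, ← Real.rpow_mul (le_of_lt hL0)]
    congr 1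
    ring
  have hVhalf : ((L : ℝ) ^ d : ℝ) = (L : ℝ) ^ ((d : ℝ)/2) * (L : ℝ) ^ ((d : ℝ)/2) := by
    rw [← Real.rpow_add hL0, ← Real.rpow_natCast (L : ℝ) d]
    congr 1
    ring
  have hhalfpos : (0 : ℝ) < (L : ℝ) ^ ((d : ℝ)/2) := Real.rpow_pos_of_pos hL0 _
  calc ‖(∫ Φ, phiI Φ I ∂μ) - ∫ Φ, phiI Φ I ∂μ'‖
      ≤ A ^ (n - 1) * n * Real.sqrt C * Real.sqrt ((L : ℝ) ^ d) / ((L : ℝ) ^ d) := hfinal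
    _ = A ^ (n - 1) * n * Real.sqrt C / (L : ℝ) ^ ((d : ℝ)/2) := by
        rw [hsqid]
        nth_rewrite 1 [hVhalf]
        exact mul_div_mul_right _ _ hhalfpos.ne'

end BK

open BK in
/-- Lemma 3.1: local correlation estimates from Wasserstein bounds for
gauge invariant measures. -/
theorem local_correlation_estimate
    (d L : ℕ) (hd : 1 ≤ d) (hL : 2 ≤ L)
    (μ μ' : Measure (Lat d L → ℂ))
    [IsProbabilityMeasure μ] [IsProbabilityMeasure μ']
    (hμ : GaugeInvariant μ) (hμ' : GaugeInvariant μ') :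
    (∀ (n : ℕ) (x y : Fin d → ℤ), x ∈ cube d L → y ∈ cube d L →
      Amax μ μ' n x = Amax μ μ' n y) ∧
    (∀ n : ℕ, 1 ≤ n →
      (∀ x ∈ cube d L, Integrable (fun Φ => ‖phi Φ x‖ ^ (2 * (n - 1))) μ ∧
        Integrable (fun Φ => ‖phi Φ x‖ ^ (2 * (n - 1))) μ') →
      ∀ I : Fin n → (Fin d → ℤ) × Bool, (∀ i, (I i).1 ∈ cube d L) →
        (∀ γ : Measure ((Lat d L → ℂ) × (Lat d L → ℂ)),
          IsProbabilityMeasure γ → IsCoupling γ μ μ' →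
          ‖(∫ Φ, phiI Φ I ∂μ) - ∫ Φ, phiI Φ I ∂μ'‖ ≤
            Amax μ μ' n (fun _ => 0) ^ (n - 1) * n *
              Real.sqrt (∫ p, fieldDistSq p.1 p.2 ∂γ) / (L : ℝ) ^ ((d : ℝ) / 2)) ∧
        ‖(∫ Φ, phiI Φ I ∂μ) - ∫ Φ, phiI Φ I ∂μ'‖ ≤
          Amax μ μ' n (fun _ => 0) ^ (n - 1) * n * W2 μ μ' / (L : ℝ) ^ ((d : ℝ) / 2)) := by
  have hL0 : (0 : ℝ) < (L : ℝ) := by exact_mod_cast Nat.pos_of_ne_zero (by omega)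
  have hh : (0 : ℝ) < (L : ℝ) ^ ((d : ℝ) / 2) := Real.rpow_pos_of_pos hL0 _
  have hW0 : 0 ≤ W2 μ μ' := by
    refine Real.sInf_nonneg fun r hr => ?_
    obtain ⟨γ, _, _, rfl⟩ := hr
    exact Real.sqrt_nonneg _
  constructor
  · intro n x y _ _
    exact Amax_shift hμ hμ' n x y
  · intro n hn1 hInt I hIcube
    have hA0 : 0 ≤ Amax μ μ' n (fun _ => 0) :=
      le_trans (Real.rpow_nonneg (integral_nonneg fun _ => pow_nonneg (norm_nonneg _) _) _)
        (le_max_left _ _)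
    by_cases hn2 : 2 ≤ n
    · obtain ⟨hIμ, hIμ'⟩ := hInt 0 (zero_mem_cube (by omega))
      have hper : ∀ γ : Measure ((Lat d L → ℂ) × (Lat d L → ℂ)),
          IsProbabilityMeasure γ → IsCoupling γ μ μ' →
          ‖(∫ Φ, phiI Φ I ∂μ) - ∫ Φ, phiI Φ I ∂μ'‖ ≤
            Amax μ μ' n (fun _ => 0) ^ (n - 1) * n *
              Real.sqrt (∫ p, fieldDistSq p.1 p.2 ∂γ) / (L : ℝ) ^ ((d : ℝ) / 2) := by
        intro γ hγp hγc
        haveI := hγp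
        exact main_bound hd hL hμ hμ' hn2 hIμ hIμ' I γ hγc
      refine ⟨hper, ?_⟩
      set c : ℝ := Amax μ μ' n (fun _ => 0) ^ (n - 1) * n with hc
      have hc0 : 0 ≤ c := mul_nonneg (pow_nonneg hA0 _) (Nat.cast_nonneg n)
      set S : Set ℝ := {r : ℝ | ∃ γ : Measure ((Lat d L → ℂ) × (Lat d L → ℂ)),
        IsProbabilityMeasure γ ∧ IsCoupling γ μ μ' ∧
        r = Real.sqrt (∫ p, fieldDistSq p.1 p.2 ∂γ)} with hS
      have hne : S.Nonempty := by
        refine ⟨Real.sqrt (∫ p, fieldDistSq p.1 p.2 ∂(μ.prod μ')), μ.prod μ', inferInstance,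
          ⟨?_, ?_⟩, rfl⟩
        · rw [Measure.map_fst_prod]
          simp
        · rw [Measure.map_snd_prod]
          simp
      have hSB : ∀ r ∈ S, ‖(∫ Φ, phiI Φ I ∂μ) - ∫ Φ, phiI Φ I ∂μ'‖ ≤ c * r /
          (L : ℝ) ^ ((d : ℝ) / 2) := by
        rintro r ⟨γ, hγp, hγc, rfl⟩
        exact hper γ hγp hγc
      have hW2S : W2 μ μ' = sInf S := rfl
      rcases eq_or_lt_of_le hc0 with hczero | hcpos
      · obtain ⟨r₀, hr₀⟩ := hne
        have := hSB r₀ hr₀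
        rw [← hczero] at this
        simp only [zero_mul, zero_div] at this
        calc ‖(∫ Φ, phiI Φ I ∂μ) - ∫ Φ, phiI Φ I ∂μ'‖ ≤ 0 := this
          _ ≤ c * W2 μ μ' / (L : ℝ) ^ ((d : ℝ) / 2) := by positivity
      · have hlow : ‖(∫ Φ, phiI Φ I ∂μ) - ∫ Φ, phiI Φ I ∂μ'‖ * (L : ℝ) ^ ((d : ℝ) / 2) / c
            ≤ sInf S := by
          refine le_csInf hne fun r hr => ?_
          have h1 := hSB r hr
          rw [le_div_iff₀ hh] at h1
          rw [div_le_iff₀ hcpos]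
          linarith [h1]
        rw [hW2S]
        rw [le_div_iff₀ hh]
        rw [div_le_iff₀ hcpos] at hlow
        linarith [hlow]
    · have hn1' : n = 1 := by omega
      subst hn1'
      have hLHS : ‖(∫ Φ, phiI Φ I ∂μ) - ∫ Φ, phiI Φ I ∂μ'‖ = 0 := by
        rw [integral_phiI_one hμ I, integral_phiI_one hμ' I, sub_zero, norm_zero]
      refine ⟨fun γ hγp hγc => ?_, ?_⟩
      · rw [hLHS]
        have h1 : (0:ℝ) ≤ ∫ p, fieldDistSq p.1 p.2 ∂γ :=
          integral_nonneg fun p => fieldDistSq_nonneg _ _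
        positivity
      · rw [hLHS]
        positivity
end
end

section
/- Let (X, 𝒜) be a measurable space, μ a probability measure on X, g : X → [0, ∞) measurable with ∫ g dμ = 1, and G : X → X measurable. Let ν be the measure defined by ν(A) := ∫ g(x) 1_A(G(x)) dμ(x), and set Z' := ∫ (1 − g)_+ dμ; assume Z' > 0. Then Z' = ∫ (g − 1)_+ dμ, ν is a probability measure, and the measure γ on X × X defined by γ := (pushforward of the measure min(1,g)·μ under x ↦ (x, G(x))) + Z'^{−1} · (pushforward of the product measure ((1−g)_+·μ) ⊗ ((g−1)_+·μ) under (x,y) ↦ (x, G(y))) is a probability measure whose first marginal is μ and whose second marginal is ν. -/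
/-!
Split `g = min 1 g + (g - 1)₊` and `1 = min 1 g + (1 - g)₊`. Both excess parts `(1 - g)₊` and
`(g - 1)₊` have mass `Z'` because `∫ (g - 1) dμ = 0`. The diagonal part of `γ` carries
`min 1 g · μ` to itself and to its image under `G`; the normalised product part has marginals
`(1 - g)₊ · μ` and the image of `(g - 1)₊ · μ` under `G`, which supply exactly the missing mass.
-/

open MeasureTheory

noncomputable section

lemma min_add_max_sub_zero {α : Type*} [AddCommGroup α] [LinearOrder α] [IsOrderedAddMonoid α]
    (a b : α) : min a b + max (a - b) 0 = a := by
  rcases le_total a b with h | h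
  · simp [h, sub_nonpos.mpr h]
  · simp [h, sub_nonneg.mpr h]

section

variable {X : Type*} [MeasurableSpace X] {μ : Measure X}

lemma integral_max_sub_zero_comm_of_integral_eq [IsProbabilityMeasure μ] {f : X → ℝ}
    {c : ℝ} (hf : Integrable f μ) (hfc : ∫ x, f x ∂μ = c) :
    ∫ x, max (f x - c) 0 ∂μ = ∫ x, max (c - f x) 0 ∂μ := by
  have hdiff : ∫ x, (max (f x - c) 0 - max (c - f x) 0) ∂μ = 0 := by
    simp_rw [← neg_sub (f _) c, max_zero_sub_max_neg_zero_eq_self]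
    rw [integral_sub hf (integrable_const c), hfc]
    simp
  have hpos : Integrable (fun x => max (f x - c) 0) μ := (hf.sub (integrable_const c)).pos_part
  have hneg : Integrable (fun x => max (c - f x) 0) μ := ((integrable_const c).sub hf).pos_part
  rwa [integral_sub hpos hneg, sub_eq_zero] at hdiff

lemma withDensity_ofReal_add_withDensity_ofReal {f h : X → ℝ} (hf : Measurable f)
    (hf0 : ∀ x, 0 ≤ f x) (hh0 : ∀ x, 0 ≤ h x) :
    μ.withDensity (fun x => ENNReal.ofReal (f x)) + μ.withDensity (fun x => ENNReal.ofReal (h x))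
      = μ.withDensity (fun x => ENNReal.ofReal (f x + h x)) := by
  rw [← withDensity_add_left hf.ennreal_ofReal]
  congr 1
  funext x
  exact (ENNReal.ofReal_add (hf0 x) (hh0 x)).symm

lemma withDensity_ofReal_apply_univ {f : X → ℝ} (hf : Integrable f μ) (hf0 : 0 ≤ᵐ[μ] f) :
    μ.withDensity (fun x => ENNReal.ofReal (f x)) Set.univ = ENNReal.ofReal (∫ x, f x ∂μ) := by
  rw [withDensity_apply _ MeasurableSet.univ, setLIntegral_univ,
    ofReal_integral_eq_lintegral_ofReal hf hf0]

def diagonalCoupling (G : X → X) (ρ α β : Measure X) (c : ENNReal) : Measure (X × X) :=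
  ρ.map (fun x => (x, G x)) + c⁻¹ • (α.prod β).map (fun p => (p.1, G p.2))

section diagonalCoupling

variable {G : X → X} {ρ α β : Measure X} {c : ENNReal}

lemma diagonalCoupling_map_fst (hG : Measurable G) [SFinite α] [SFinite β]
    (hβ : β Set.univ = c) (hc0 : c ≠ 0) (hctop : c ≠ ⊤) :
    (diagonalCoupling G ρ α β c).map Prod.fst = ρ + α := by
  rw [diagonalCoupling, Measure.map_add _ _ measurable_fst, Measure.map_smul,
    Measure.map_map measurable_fst (measurable_id'.prodMk hG),
    Measure.map_map measurable_fst (measurable_fst.prodMk (hG.fun_comp measurable_snd))]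
  change ρ.map id + c⁻¹ • (α.prod β).map Prod.fst = ρ + α
  rw [Measure.map_id, Measure.map_fst_prod, hβ, smul_smul, ENNReal.inv_mul_cancel hc0 hctop,
    one_smul]

lemma diagonalCoupling_map_snd (hG : Measurable G) [SFinite α] [SFinite β]
    (hα : α Set.univ = c) (hc0 : c ≠ 0) (hctop : c ≠ ⊤) :
    (diagonalCoupling G ρ α β c).map Prod.snd = (ρ + β).map G := by
  rw [diagonalCoupling, Measure.map_add _ _ measurable_snd, Measure.map_smul,
    Measure.map_map measurable_snd (measurable_id'.prodMk hG),
    Measure.map_map measurable_snd (measurable_fst.prodMk (hG.fun_comp measurable_snd))]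
  change ρ.map G + c⁻¹ • (α.prod β).map (G ∘ Prod.snd) = (ρ + β).map G
  rw [← Measure.map_map hG measurable_snd, Measure.map_snd_prod, hα, Measure.map_smul,
    smul_smul, ENNReal.inv_mul_cancel hc0 hctop, one_smul, Measure.map_add _ _ hG]

end diagonalCoupling

end

/-- diagonal concentration coupling, after Saksman–Webb: given a
probability measure `μ`, a nonnegative weight `g` with `∫ g dμ = 1` and a measurable map
`G`, the measure `ν(A) := ∫ g(x) 1_A(G(x)) dμ(x)` is a probability measure, the positive
and negative parts of `g − 1` have equal `μ`-integrals, and the explicit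
diagonal-plus-product measure `γ` is a coupling of `μ` and `ν`. -/
theorem diagonal_coupling
    {X : Type*} [MeasurableSpace X] (μ : Measure X) [IsProbabilityMeasure μ]
    (g : X → ℝ) (hg0 : ∀ x, 0 ≤ g x) (hgm : Measurable g)
    (hgi : Integrable g μ) (hg1 : ∫ x, g x ∂μ = 1)
    (G : X → X) (hG : Measurable G)
    (ν : Measure X)
    (hν : ν = Measure.map G (μ.withDensity fun x => ENNReal.ofReal (g x)))
    (Z' : ℝ) (hZ'def : Z' = ∫ x, max (1 - g x) 0 ∂μ) (hZ' : 0 < Z')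
    (γ : Measure (X × X))
    (hγ : γ =
      Measure.map (fun x => (x, G x))
        (μ.withDensity fun x => ENNReal.ofReal (min 1 (g x))) +
      (ENNReal.ofReal Z')⁻¹ •
        Measure.map (fun p : X × X => (p.1, G p.2))
          ((μ.withDensity fun x => ENNReal.ofReal (max (1 - g x) 0)).prod
            (μ.withDensity fun x => ENNReal.ofReal (max (g x - 1) 0)))) :
    Z' = ∫ x, max (g x - 1) 0 ∂μ ∧
    IsProbabilityMeasure ν ∧
    IsProbabilityMeasure γ ∧
    γ.map Prod.fst = μ ∧ γ.map Prod.snd = ν := by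
  have hneg : Integrable (fun x => max (1 - g x) 0) μ := ((integrable_const 1).sub hgi).pos_part
  have hpos : Integrable (fun x => max (g x - 1) 0) μ := (hgi.sub (integrable_const 1)).pos_part
  have hZ'plus : Z' = ∫ x, max (g x - 1) 0 ∂μ := by
    rw [hZ'def, integral_max_sub_zero_comm_of_integral_eq hgi hg1]
  have hZ'ne : ENNReal.ofReal Z' ≠ 0 := (ENNReal.ofReal_pos.mpr hZ').ne'
  have hnegMass : μ.withDensity (fun x => ENNReal.ofReal (max (1 - g x) 0)) Set.univ
      = ENNReal.ofReal Z' := by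
    rw [withDensity_ofReal_apply_univ hneg (ae_of_all _ fun _ => le_max_right _ _), hZ'def]
  have hposMass : μ.withDensity (fun x => ENNReal.ofReal (max (g x - 1) 0)) Set.univ
      = ENNReal.ofReal Z' := by
    rw [withDensity_ofReal_apply_univ hpos (ae_of_all _ fun _ => le_max_right _ _), hZ'plus]
  have hminNonneg := fun x => le_min zero_le_one (hg0 x)
  have hfst : γ.map Prod.fst = μ := by
    rw [hγ, ← diagonalCoupling, diagonalCoupling_map_fst hG hposMass hZ'ne ENNReal.ofReal_ne_top,
      withDensity_ofReal_add_withDensity_ofReal (measurable_const.min hgm) hminNonneg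
        (fun _ => le_max_right _ _)]
    simp_rw [min_add_max_sub_zero, ENNReal.ofReal_one]
    exact withDensity_one
  have hsnd : γ.map Prod.snd = ν := by
    rw [hγ, ← diagonalCoupling, diagonalCoupling_map_snd hG hnegMass hZ'ne ENNReal.ofReal_ne_top,
      withDensity_ofReal_add_withDensity_ofReal (measurable_const.min hgm) hminNonneg
        (fun _ => le_max_right _ _), hν]
    simp_rw [min_comm (1 : ℝ), min_add_max_sub_zero]
  have : IsProbabilityMeasure (γ.map Prod.fst) := hfst ▸ inferInstance
  have hγProb : IsProbabilityMeasure γ := Measure.isProbabilityMeasure_of_map Prod.fst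
  exact ⟨hZ'plus, hsnd ▸ Measure.isProbabilityMeasure_map measurable_snd.aemeasurable, hγProb,
    hfst, hsnd⟩
end
end

section
/- Let n ≥ 2 be an integer, N > 0, and let f, w : ℝ^n → ℝ be bounded continuous functions. Then lim_{σ→0+} ∫_{ℝ^n} f(s) w(s) (2πσ²)^{−1/2} e^{−(|s|²−N)²/(2σ²)} ds = (1/2) N^{n/2−1} ∫_{S^{n−1}} f(√N Ω) w(√N Ω) dΩ, where dΩ denotes the surface measure on the unit sphere S^{n−1} ⊂ ℝ^n and |s| is the Euclidean norm. -/
/-!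
In polar coordinates followed by `u = r²`, the integral becomes `∫ H d𝒩(N, σ²)` against the
Gaussian law, where `H(u) = ½ u^{n/2-1} ∫_{S^{n-1}} (f w)(√u Ω) dΩ` is the density of the image of
`f w ds` under `s ↦ |s|²`. Writing `𝒩(N, σ²)` as the image of `𝒩(0, 1)` under `y ↦ N + σ y`,
dominated convergence gives the limit `H(N)`: `H` is continuous at `N > 0`, and for `n ≥ 2` it
grows at most exponentially, which the Gaussian tails absorb.
-/

open MeasureTheory ProbabilityTheory Set Metric Filter Topology Real
open scoped NNReal BoundedContinuousFunction

noncomputable section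

section Polar

variable {E F : Type*} [NormedAddCommGroup E] [NormedSpace ℝ E] [FiniteDimensional ℝ E]
  [MeasurableSpace E] [BorelSpace E] (μ : Measure E) [μ.IsAddHaarMeasure]
  [NormedAddCommGroup F] [NormedSpace ℝ F]

def sphereIntegral (g : E → F) (r : ℝ) : F :=
  ∫ ω : sphere (0 : E) 1, g (r • (ω : E)) ∂μ.toSphere

lemma integral_volumeIoiPow (m : ℕ) (ψ : ℝ → F) :
    ∫ r, ψ r ∂Measure.volumeIoiPow m = ∫ r in Ioi (0 : ℝ), r ^ m • ψ r := by
  rw [Measure.volumeIoiPow, integral_withDensity_eq_integral_toReal_smul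
      (by fun_prop) (ae_of_all _ fun _ => ENNReal.ofReal_lt_top),
    integral_subtype_comap measurableSet_Ioi fun r => (ENNReal.ofReal (r ^ m)).toReal • ψ r]
  refine setIntegral_congr_fun measurableSet_Ioi fun r (hr : 0 < r) => ?_
  rw [ENNReal.toReal_ofReal (by positivity)]

theorem integral_eq_integral_Ioi_pow_smul_sphereIntegral [Nontrivial E] {g : E → F}
    (hg : Integrable g μ) :
    ∫ x, g x ∂μ =
      ∫ r in Ioi (0 : ℝ), r ^ (Module.finrank ℝ E - 1) • sphereIntegral μ g r := by
  set Φ : sphere (0 : E) 1 × Ioi (0 : ℝ) → F := fun p => g ((p.2 : ℝ) • (p.1 : E))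
  have hmp := μ.measurePreserving_homeomorphUnitSphereProd
  have hemb := (homeomorphUnitSphereProd E).measurableEmbedding
  have hΦ : Φ ∘ homeomorphUnitSphereProd E = fun x : ({0}ᶜ : Set E) => g x := by
    ext x
    simp [Φ, smul_inv_smul₀ (norm_ne_zero_iff.2 x.2)]
  have hcompl : MeasurableSet ({0}ᶜ : Set E) := (measurableSet_singleton 0).compl
  have hΦi :
      Integrable Φ (μ.toSphere.prod (Measure.volumeIoiPow (Module.finrank ℝ E - 1))) := by
    rw [← hmp.integrable_comp_emb hemb, hΦ]
    exact (integrableOn_iff_comap_subtypeVal hcompl).1 hg.integrableOn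
  calc ∫ x, g x ∂μ = ∫ x : ({0}ᶜ : Set E), g x ∂μ.comap Subtype.val := by
        rw [integral_subtype_comap hcompl, restrict_compl_singleton]
    _ = ∫ p, Φ p ∂μ.toSphere.prod (Measure.volumeIoiPow (Module.finrank ℝ E - 1)) := by
        rw [← hmp.integral_comp hemb, ← hΦ]; rfl
    _ = ∫ r, sphereIntegral μ g r ∂Measure.volumeIoiPow (Module.finrank ℝ E - 1) :=
        integral_prod_symm Φ hΦi
    _ = _ := integral_volumeIoiPow _ _

lemma continuous_sphereIntegral (g : E →ᵇ F) : Continuous (sphereIntegral μ g) :=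
  continuous_of_dominated (bound := fun _ => ‖g‖)
    (fun r => (g.continuous.comp (continuous_subtype_val.const_smul r)).aestronglyMeasurable)
    (fun _ => ae_of_all _ fun _ => g.norm_coe_le_norm _) (integrable_const _)
    (ae_of_all _ fun _ => g.continuous.comp (continuous_id.smul continuous_const))

lemma norm_sphereIntegral_le (g : E →ᵇ F) (r : ℝ) :
    ‖sphereIntegral μ g r‖ ≤ ‖g‖ * μ.toSphere.real univ :=
  norm_integral_le_of_norm_le_const (ae_of_all _ fun _ => g.norm_coe_le_norm _)

end Polar

lemma integral_Ioi_pow_mul_comp_sq {d : ℕ} (hd : 1 ≤ d) (Q : ℝ → ℝ) :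
    ∫ r in Ioi (0 : ℝ), r ^ (d - 1) * Q (r ^ 2) =
      ∫ u in Ioi (0 : ℝ), 1 / 2 * u ^ ((d : ℝ) / 2 - 1) * Q u := by
  rw [← integral_comp_rpow_Ioi (fun u => 1 / 2 * u ^ ((d : ℝ) / 2 - 1) * Q u) two_ne_zero]
  refine setIntegral_congr_fun measurableSet_Ioi fun r (hr : 0 < r) => ?_
  have hpow : r ^ (d - 1) = r ^ ((2 : ℝ) - 1) * (r ^ (2 : ℝ)) ^ ((d : ℝ) / 2 - 1) := by
    rw [← rpow_mul hr.le, ← rpow_add hr, ← rpow_natCast, Nat.cast_sub hd]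
    ring_nf
  rw [hpow, rpow_two, abs_two, smul_eq_mul]
  ring

lemma gaussianPDFReal_le_mul_exp_neg (m : ℝ) (v : ℝ≥0) (x : ℝ) :
    gaussianPDFReal m v x ≤ (√(2 * π * v))⁻¹ * rexp (v / 2 + m) * rexp (-x) := by
  rcases eq_or_ne v 0 with rfl | hv
  · simp
  have hv' : (0 : ℝ) < v := by positivity
  rw [gaussianPDFReal, mul_assoc _ (rexp _), ← exp_add]
  gcongr
  rw [div_le_iff₀ (by positivity)]
  nlinarith [sq_nonneg (x - m - v)]

lemma abs_rpow_le_exp_mul_abs {ν : ℝ} (hν : 0 ≤ ν) (u : ℝ) : |u ^ ν| ≤ rexp (ν * |u|) := by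
  refine (abs_rpow_le_exp_log_mul u ν).trans (exp_le_exp.2 ?_)
  rw [mul_comm, ← log_abs]
  exact mul_le_mul_of_nonneg_left (log_le_self (abs_nonneg u)) hν

lemma exp_mul_abs_le_add (a y : ℝ) : rexp (a * |y|) ≤ rexp (a * y) + rexp (-a * y) := by
  rcases abs_choice y with h | h <;> rw [h]
  · linarith [exp_pos (-a * y)]
  · rw [mul_neg, ← neg_mul]
    linarith [exp_pos (a * y)]

lemma integral_gaussianReal_eq_integral_const_add_mul {H : ℝ → ℝ} (hH : Measurable H)
    (m : ℝ) (v : ℝ≥0) :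
    ∫ x, H x ∂gaussianReal m v = ∫ y, H (m + √(v : ℝ) * y) ∂gaussianReal 0 1 := by
  have hcomp : (fun y => m + √(v : ℝ) * y) = (m + ·) ∘ (√(v : ℝ) * ·) := rfl
  have hmap : gaussianReal m v = (gaussianReal 0 1).map fun y => m + √(v : ℝ) * y := by
    rw [hcomp, ← Measure.map_map (by fun_prop) (by fun_prop), gaussianReal_map_const_mul,
      gaussianReal_map_const_add]
    congr 1
    · simp
    · ext; simp
  rw [hmap, integral_map (by fun_prop) hH.aestronglyMeasurable]

theorem tendsto_integral_gaussianReal_of_continuousAt {H : ℝ → ℝ} {m C a : ℝ} (ha : 0 ≤ a)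
    (hHm : Measurable H) (hHc : ContinuousAt H m) (hH : ∀ x, |H x| ≤ C * rexp (a * |x|)) :
    Tendsto (fun v : ℝ≥0 => ∫ x, H x ∂gaussianReal m v) (𝓝 0) (𝓝 (H m)) := by
  have hC : 0 ≤ C := nonneg_of_mul_nonneg_left ((abs_nonneg _).trans (hH 0)) (exp_pos _)
  simp_rw [integral_gaussianReal_eq_integral_const_add_mul hHm m]
  rw [show H m = ∫ _, H m ∂gaussianReal 0 1 by simp]
  refine tendsto_integral_filter_of_dominated_convergence
    (fun y => C * rexp (a * |m|) * (rexp (a * y) + rexp (-a * y)))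
    (Eventually.of_forall fun v => (hHm.comp (by fun_prop)).aestronglyMeasurable) ?_
    (((integrable_exp_mul_gaussianReal _).add (integrable_exp_mul_gaussianReal _)).const_mul _)
    (ae_of_all _ fun y => hHc.tendsto.comp ?_)
  · filter_upwards [eventually_le_nhds zero_lt_one] with v hv
    refine ae_of_all _ fun y => ?_
    have hsqrt : √(v : ℝ) ≤ 1 := sqrt_le_one.2 (by exact_mod_cast hv)
    have hshift : |m + √(v : ℝ) * y| ≤ |m| + |y| := by
      refine (abs_add_le _ _).trans (add_le_add_right ?_ _)
      rw [abs_mul, abs_of_nonneg (sqrt_nonneg _)]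
      exact mul_le_of_le_one_left (abs_nonneg y) hsqrt
    calc ‖H (m + √(v : ℝ) * y)‖ ≤ C * rexp (a * (|m| + |y|)) :=
          (hH _).trans (by gcongr)
      _ = C * rexp (a * |m|) * rexp (a * |y|) := by rw [mul_add, exp_add, mul_assoc]
      _ ≤ _ := by gcongr; exact exp_mul_abs_le_add a y
  · have : Continuous fun v : ℝ≥0 => m + √(v : ℝ) * y := by fun_prop
    simpa using this.tendsto 0

lemma div_two_sub_one_nonneg {d : ℕ} (hd : 2 ≤ d) : 0 ≤ (d : ℝ) / 2 - 1 := by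
  rw [sub_nonneg, le_div_iff₀ two_pos, one_mul]
  exact_mod_cast hd

section NormSq

variable {E : Type*} [NormedAddCommGroup E] [NormedSpace ℝ E] [FiniteDimensional ℝ E]
  [MeasurableSpace E] [BorelSpace E] (μ : Measure E) [μ.IsAddHaarMeasure]

lemma integrable_exp_neg_norm_sq [Nontrivial E] :
    Integrable (fun x : E => rexp (-‖x‖ ^ 2)) μ := by
  rw [integrable_fun_norm_addHaar μ (f := fun y => rexp (-y ^ 2))]
  have hexp : -1 < ((Module.finrank ℝ E - 1 : ℕ) : ℝ) :=
    neg_one_lt_zero.trans_le (Nat.cast_nonneg _)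
  refine (integrableOn_rpow_mul_exp_neg_mul_sq one_pos hexp).congr_fun (fun y _ => ?_)
    measurableSet_Ioi
  simp [rpow_natCast]

lemma integrable_mul_gaussianPDFReal_norm_sq [Nontrivial E] (g : E →ᵇ ℝ) (m : ℝ) (v : ℝ≥0) :
    Integrable (fun x => g x * gaussianPDFReal m v (‖x‖ ^ 2)) μ := by
  refine ((integrable_exp_neg_norm_sq μ).const_mul
    (‖g‖ * ((√(2 * π * v))⁻¹ * rexp (v / 2 + m)))).mono' ?_ (ae_of_all _ fun x => ?_)
  · exact g.continuous.aestronglyMeasurable.mul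
      ((measurable_gaussianPDFReal m v).comp (by fun_prop)).aestronglyMeasurable
  · rw [norm_mul, Real.norm_of_nonneg (gaussianPDFReal_nonneg _ _ _), mul_assoc]
    exact mul_le_mul (g.norm_coe_le_norm x) (gaussianPDFReal_le_mul_exp_neg m v _)
      (gaussianPDFReal_nonneg _ _ _) (norm_nonneg g)

/-- The density of the image of `g • μ` under `x ↦ ‖x‖²`: polar coordinates and `u = r²`. -/
def normSqDensity (g : E → ℝ) : ℝ → ℝ :=
  (Ioi 0).indicator fun u =>
    1 / 2 * u ^ ((Module.finrank ℝ E : ℝ) / 2 - 1) * sphereIntegral μ g √u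

theorem integral_mul_comp_norm_sq [Nontrivial E] {g : E → ℝ} {k : ℝ → ℝ}
    (hgk : Integrable (fun x => g x * k (‖x‖ ^ 2)) μ) :
    ∫ x, g x * k (‖x‖ ^ 2) ∂μ = ∫ u, normSqDensity μ g u * k u := by
  have hsphere : ∀ r : ℝ, 0 < r → sphereIntegral μ (fun x => g x * k (‖x‖ ^ 2)) r =
      sphereIntegral μ g √(r ^ 2) * k (r ^ 2) := by
    intro r hr
    rw [sqrt_sq hr.le, sphereIntegral, sphereIntegral, ← integral_mul_const]
    refine integral_congr_ae (ae_of_all _ fun ω => ?_)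
    simp [norm_smul, abs_of_pos hr]
  calc ∫ x, g x * k (‖x‖ ^ 2) ∂μ
      = ∫ r in Ioi (0 : ℝ), r ^ (Module.finrank ℝ E - 1) •
          sphereIntegral μ (fun x => g x * k (‖x‖ ^ 2)) r :=
        integral_eq_integral_Ioi_pow_smul_sphereIntegral μ hgk
    _ = ∫ r in Ioi (0 : ℝ), r ^ (Module.finrank ℝ E - 1) *
          (sphereIntegral μ g √(r ^ 2) * k (r ^ 2)) :=
        setIntegral_congr_fun measurableSet_Ioi fun r hr => by
          rw [hsphere r hr, smul_eq_mul]
    _ = ∫ u in Ioi (0 : ℝ), 1 / 2 * u ^ ((Module.finrank ℝ E : ℝ) / 2 - 1) *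
          (sphereIntegral μ g √u * k u) :=
        integral_Ioi_pow_mul_comp_sq Module.finrank_pos fun u => sphereIntegral μ g √u * k u
    _ = ∫ u, normSqDensity μ g u * k u := by
        simp_rw [normSqDensity, ← indicator_mul_left, integral_indicator measurableSet_Ioi,
          mul_assoc]

lemma integral_mul_gaussianPDFReal_norm_sq [Nontrivial E] (g : E →ᵇ ℝ) (m : ℝ) {v : ℝ≥0}
    (hv : v ≠ 0) :
    ∫ x, g x * gaussianPDFReal m v (‖x‖ ^ 2) ∂μ =
      ∫ u, normSqDensity μ g u ∂gaussianReal m v := by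
  rw [integral_mul_comp_norm_sq μ (integrable_mul_gaussianPDFReal_norm_sq μ g m v),
    integral_gaussianReal_eq_integral_smul hv]
  simp_rw [smul_eq_mul, mul_comm]

lemma measurable_normSqDensity (g : E →ᵇ ℝ) : Measurable (normSqDensity μ g) :=
  ((measurable_const.mul (measurable_id.pow_const _)).mul
    ((continuous_sphereIntegral μ g).measurable.comp continuous_sqrt.measurable)).indicator
      measurableSet_Ioi

omit [FiniteDimensional ℝ E] [BorelSpace E] [μ.IsAddHaarMeasure] in
lemma normSqDensity_of_pos (g : E → ℝ) {u : ℝ} (hu : 0 < u) :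
    normSqDensity μ g u =
      1 / 2 * u ^ ((Module.finrank ℝ E : ℝ) / 2 - 1) * sphereIntegral μ g √u :=
  indicator_of_mem hu _

lemma continuousAt_normSqDensity (g : E →ᵇ ℝ) {u : ℝ} (hu : 0 < u) :
    ContinuousAt (normSqDensity μ g) u := by
  refine ContinuousAt.congr ?_ (eventually_of_mem (Ioi_mem_nhds hu)
    fun u hu => (normSqDensity_of_pos μ g hu).symm)
  exact (continuousAt_const.mul (continuousAt_rpow_const _ _ (Or.inl hu.ne'))).mul
    ((continuous_sphereIntegral μ g).comp continuous_sqrt).continuousAt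

lemma abs_normSqDensity_le (hd : 2 ≤ Module.finrank ℝ E) (g : E →ᵇ ℝ) (u : ℝ) :
    |normSqDensity μ g u| ≤
      ‖g‖ * μ.toSphere.real univ * rexp (((Module.finrank ℝ E : ℝ) / 2 - 1) * |u|) := by
  rw [← Real.norm_eq_abs]
  refine (norm_indicator_le_norm_self _ u).trans ?_
  rw [norm_mul, norm_mul, Real.norm_eq_abs, Real.norm_eq_abs (_ ^ _)]
  calc |1 / 2| * |u ^ ((Module.finrank ℝ E : ℝ) / 2 - 1)| * ‖sphereIntegral μ g √u‖
      ≤ 1 * rexp (((Module.finrank ℝ E : ℝ) / 2 - 1) * |u|) *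
          (‖g‖ * μ.toSphere.real univ) := by
        gcongr
        · norm_num
        · exact abs_rpow_le_exp_mul_abs (div_two_sub_one_nonneg hd) u
        · exact norm_sphereIntegral_le μ g _
    _ = _ := by ring

theorem tendsto_integral_mul_gaussianPDFReal_norm_sq (hd : 2 ≤ Module.finrank ℝ E)
    (g : E →ᵇ ℝ) {N : ℝ} (hN : 0 < N) :
    Tendsto (fun v : ℝ≥0 => ∫ x, g x * gaussianPDFReal N v (‖x‖ ^ 2) ∂μ) (𝓝[≠] 0)
      (𝓝 (1 / 2 * N ^ ((Module.finrank ℝ E : ℝ) / 2 - 1) * sphereIntegral μ g √N)) := by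
  have : Nontrivial E := Module.nontrivial_of_finrank_pos (R := ℝ) (by omega)
  rw [← normSqDensity_of_pos μ g hN]
  refine ((tendsto_integral_gaussianReal_of_continuousAt (div_two_sub_one_nonneg hd)
    (measurable_normSqDensity μ g) (continuousAt_normSqDensity μ g hN)
    (abs_normSqDensity_le μ hd g)).mono_left
      nhdsWithin_le_nhds).congr' ?_
  filter_upwards [self_mem_nhdsWithin] with v hv
  exact (integral_mul_gaussianPDFReal_norm_sq μ g N hv).symm

end NormSq

/-- Appendix A: the Gaussian approximations of the δ-constraint
`δ(|s|² − N)` converge to the weighted surface integral over the sphere of radius `√N`: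
for bounded continuous `f, w`,
`lim_{σ→0⁺} ∫ f w (2πσ²)^{−1/2} e^{−(|s|²−N)²/(2σ²)} = (1/2) N^{n/2−1} ∫_{S^{n−1}} (fw)(√N Ω) dΩ`. -/
theorem gaussian_delta_approximation
    (n : ℕ) (hn : 2 ≤ n) (N : ℝ) (hN : 0 < N)
    (f w : BoundedContinuousFunction (EuclideanSpace ℝ (Fin n)) ℝ) :
    Filter.Tendsto
      (fun σ : ℝ =>
        ∫ s : EuclideanSpace ℝ (Fin n),
          f s * w s *
            ((Real.sqrt (2 * Real.pi * σ ^ 2))⁻¹ *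
              Real.exp (-(‖s‖ ^ 2 - N) ^ 2 / (2 * σ ^ 2))))
      (nhdsWithin 0 (Set.Ioi 0))
      (nhds ((1 / 2) * N ^ ((n : ℝ) / 2 - 1) *
        ∫ Ω : Metric.sphere (0 : EuclideanSpace ℝ (Fin n)) 1,
          f (Real.sqrt N • (Ω : EuclideanSpace ℝ (Fin n))) *
            w (Real.sqrt N • (Ω : EuclideanSpace ℝ (Fin n)))
          ∂((volume : Measure (EuclideanSpace ℝ (Fin n))).toSphere))) := by
  have hvar : Tendsto (fun σ : ℝ => (σ ^ 2).toNNReal) (𝓝[>] 0) (𝓝[≠] 0) := by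
    refine tendsto_nhdsWithin_iff.2
      ⟨?_, eventually_nhdsWithin_of_forall fun σ (hσ : 0 < σ) => by simpa using hσ.ne'⟩
    have : Continuous fun σ : ℝ => (σ ^ 2).toNNReal := by fun_prop
    simpa using (this.tendsto 0).mono_left nhdsWithin_le_nhds
  have key := (tendsto_integral_mul_gaussianPDFReal_norm_sq volume
    (by rwa [finrank_euclideanSpace_fin]) (f * w) hN).comp hvar
  rw [finrank_euclideanSpace_fin] at key
  refine key.congr fun σ => integral_congr_ae (ae_of_all _ fun s => ?_)
  simp [gaussianPDFReal, Real.coe_toNNReal _ (sq_nonneg σ)]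
end
end

section
/- Suppose Assumption (A) holds. Then the integral ρ_∞ := ∫_{[0,1)^d} (ω(k) − ω_min)^{−1} dk is finite. -/
/-!
Away from the minima the integrand is continuous. At a minimum `k₀` the gradient vanishes and the
Hessian is coercive, so `ω k - ω_min ≥ c ‖k - k₀‖²` nearby, and `‖k - k₀‖⁻²` is integrable near
`k₀` because `2 < d`. Hence the integrand is locally integrable, so integrable on the compact closed
unit cube.
-/

open MeasureTheory Set Metric Filter Topology

section

variable {E : Type*} [NormedAddCommGroup E] [NormedSpace ℝ E]

theorem isCoercive_of_apply_self_pos [FiniteDimensional ℝ E] {Q : E →L[ℝ] E →L[ℝ] ℝ}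
    (hQ : ∀ v ≠ 0, 0 < Q v v) : IsCoercive Q := by
  cases subsingleton_or_nontrivial E
  · exact ⟨1, one_pos, fun u => by simp [Subsingleton.elim u 0]⟩
  have hcont : Continuous fun v => Q v v := by fun_prop
  obtain ⟨v₀, hv₀, hmin⟩ := (isCompact_sphere (0 : E) 1).exists_isMinOn
    (NormedSpace.sphere_nonempty.2 zero_le_one) hcont.continuousOn
  refine ⟨Q v₀ v₀, hQ v₀ (ne_zero_of_mem_unit_sphere ⟨v₀, hv₀⟩), fun u => ?_⟩
  rcases eq_or_ne u 0 with rfl | hu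
  · simp
  have hu' : 0 < ‖u‖ := norm_pos_iff.2 hu
  have hsphere : ‖u‖⁻¹ • u ∈ sphere (0 : E) 1 := by
    simp [norm_smul, hu'.ne']
  have hle : Q v₀ v₀ ≤ Q (‖u‖⁻¹ • u) (‖u‖⁻¹ • u) := hmin hsphere
  simp only [map_smul, smul_apply, smul_eq_mul] at hle
  have hscale : ‖u‖⁻¹ * (‖u‖⁻¹ * Q u u) * (‖u‖ * ‖u‖) = Q u u := by field_simp
  nlinarith [mul_le_mul_of_nonneg_right hle (mul_self_nonneg ‖u‖)]

theorem exists_quadratic_growth_of_isCoercive {f : E → ℝ} {x₀ : E} {Q : E →L[ℝ] E →L[ℝ] ℝ}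
    (hQ : IsCoercive Q) (hf : ∀ᶠ x in 𝓝 x₀, DifferentiableAt ℝ f x)
    (hf' : HasFDerivAt (fderiv ℝ f) Q x₀) (hcrit : fderiv ℝ f x₀ = 0) :
    ∃ c > 0, ∀ᶠ x in 𝓝 x₀, c * ‖x - x₀‖ ^ 2 ≤ f x - f x₀ := by
  obtain ⟨C, hC, hCQ⟩ := hQ
  obtain ⟨r, hr, hball⟩ := Metric.eventually_nhds_iff_ball.1
    (hf.and (hf'.isLittleO.bound (half_pos hC)))
  refine ⟨C / 4, by positivity, Metric.eventually_nhds_iff_ball.2 ⟨r, hr, fun x hx => ?_⟩⟩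
  set h := x - x₀
  have hseg : ∀ t ∈ Icc (0 : ℝ) 1, x₀ + t • h ∈ ball x₀ r := fun t ht =>
    (convex_ball x₀ r).add_smul_sub_mem (mem_ball_self hr) hx ht
  have hderiv : ∀ t ∈ Icc (0 : ℝ) 1,
      HasDerivAt (fun t : ℝ => f (x₀ + t • h)) (fderiv ℝ f (x₀ + t • h) h) t := fun t ht => by
    have hline : HasDerivAt (fun t : ℝ => x₀ + t • h) h t := by
      simpa using ((hasDerivAt_id t).smul_const h).const_add x₀
    exact (hball _ (hseg t ht)).1.hasFDerivAt.comp_hasDerivAt t hline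
  -- To first order `f'(x₀ + t h) h ≈ t Q h h ≥ t C ‖h‖²`, with error at most `t (C/2) ‖h‖²`.
  have hslope : ∀ t ∈ Icc (0 : ℝ) 1, C / 2 * ‖h‖ ^ 2 * t ≤ fderiv ℝ f (x₀ + t • h) h := by
    intro t ht
    have hlin := (hball _ (hseg t ht)).2
    rw [hcrit, sub_zero, add_sub_cancel_left] at hlin
    set L := fderiv ℝ f (x₀ + t • h) - Q (t • h)
    have hL : -(C / 2 * ‖t • h‖ * ‖h‖) ≤ L h :=
      neg_le_of_abs_le ((L.le_opNorm h).trans (by gcongr))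
    have hsplit : fderiv ℝ f (x₀ + t • h) h = L h + t * Q h h := by simp [L]
    rw [norm_smul, Real.norm_of_nonneg ht.1] at hL
    nlinarith [hCQ h, ht.1]
  -- Compare `t ↦ f (x₀ + t h)` on `[0, 1]` with the parabola having derivative `(C/2) ‖h‖² t`.
  have key := image_le_of_deriv_right_le_deriv_boundary
    (f := fun t : ℝ => f x₀ + C / 4 * ‖h‖ ^ 2 * t ^ 2) (f' := fun t => C / 2 * ‖h‖ ^ 2 * t)
    (B := fun t : ℝ => f (x₀ + t • h)) (B' := fun t => fderiv ℝ f (x₀ + t • h) h)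
    (a := 0) (b := 1) (by fun_prop)
    (fun t _ => ((((hasDerivAt_pow 2 t).const_mul (C / 4 * ‖h‖ ^ 2)).const_add
      (f x₀)).congr_deriv (by norm_num; ring)).hasDerivWithinAt)
    (by simp)
    (fun t ht => (hderiv t ht).continuousAt.continuousWithinAt)
    (fun t ht => (hderiv t (Ico_subset_Icc_self ht)).hasDerivWithinAt)
    (fun t ht => hslope t (Ico_subset_Icc_self ht))
    (right_mem_Icc.2 zero_le_one)
  simp only [one_pow, mul_one, one_smul, h, add_sub_cancel] at key
  linarith

variable [FiniteDimensional ℝ E] [MeasurableSpace E] [BorelSpace E]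
  {μ : Measure E} [μ.IsAddHaarMeasure]

theorem integrableAtFilter_nhds_of_norm_le_rpow {F : Type*} [NormedAddCommGroup F]
    (hd : 1 ≤ Module.finrank ℝ E) {f : E → F} {x₀ : E} {C α : ℝ}
    (hα : α < Module.finrank ℝ E) (hbound : ∀ᶠ x in 𝓝 x₀, ‖f x‖ ≤ C * ‖x - x₀‖ ^ (-α))
    (hf : AEStronglyMeasurable f μ) :
    IntegrableAtFilter f (𝓝 x₀) μ := by
  obtain ⟨r, hr, hball⟩ := Metric.eventually_nhds_iff_ball.1 hbound
  have htrans := measurePreserving_add_right μ x₀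
  refine ⟨ball x₀ r, ball_mem_nhds x₀ hr, ?_⟩
  rw [← htrans.integrableOn_comp_preimage (measurableEmbedding_addRight x₀),
    preimage_add_right_ball, sub_self]
  refine integrableOn_ball_of_norm_le_rpow (C := C) hd hα
    (ae_restrict_of_forall_mem measurableSet_ball fun y hy => ?_)
    (hf.comp_measurePreserving htrans)
  simpa using hball (y + x₀) (by simpa using hy)

theorem locallyIntegrable_inv_sub_of_nondegenerate_minima (hd : 2 < Module.finrank ℝ E)
    {f : E → ℝ} {m : ℝ} (hf : ContDiff ℝ 2 f) (hm : ∀ x, m ≤ f x)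
    (hHess : ∀ x, f x = m → ∀ v ≠ 0, 0 < fderiv ℝ (fderiv ℝ f) x v v) :
    LocallyIntegrable (fun x => (f x - m)⁻¹) μ := by
  have hmeas : AEStronglyMeasurable (fun x => (f x - m)⁻¹) μ :=
    (hf.continuous.measurable.sub_const m).inv.aestronglyMeasurable
  intro x₀
  rcases (hm x₀).lt_or_eq with hlt | heq
  · exact Tendsto.integrableAtFilter hmeas.stronglyMeasurableAtFilter (μ.finiteAt_nhds x₀)
      ((hf.continuous.continuousAt.sub continuousAt_const).inv₀ (sub_pos.2 hlt).ne')
  obtain ⟨c, hc, hgrowth⟩ := exists_quadratic_growth_of_isCoercive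
    (isCoercive_of_apply_self_pos (hHess x₀ heq.symm))
    (Eventually.of_forall fun x => hf.differentiable (by norm_num) x)
    (((hf.fderiv_right le_rfl).differentiable one_ne_zero) x₀).hasFDerivAt
    (IsLocalMin.fderiv_eq_zero (Eventually.of_forall fun x => heq ▸ hm x))
  refine integrableAtFilter_nhds_of_norm_le_rpow (C := c⁻¹) (α := 2) (by omega)
    (by exact_mod_cast hd) (hgrowth.mono fun x hx => ?_) hmeas
  rw [← heq] at hx
  rcases eq_or_ne x x₀ with rfl | hne
  · simp [← heq]
  have hpos : 0 < c * ‖x - x₀‖ ^ 2 := by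
    have := norm_pos_iff.2 (sub_ne_zero.2 hne)
    positivity
  rw [Real.norm_of_nonneg (inv_nonneg.2 (hpos.le.trans hx)), Real.rpow_neg (norm_nonneg _),
    Real.rpow_two, ← mul_inv]
  exact inv_anti₀ hpos hx

end

theorem critical_density_integral_finite_general
    (d : ℕ) (hd : 3 ≤ d) (ω : (Fin d → ℝ) → ℝ)
    (hsmooth : ContDiff ℝ 2 ω)
    (ωmin : ℝ) (hmin : ∀ k, ωmin ≤ ω k)
    (hHess : ∀ k₀ : Fin d → ℝ, ω k₀ = ωmin →
      ∀ v : Fin d → ℝ, v ≠ 0 → 0 < iteratedFDeriv ℝ 2 ω k₀ ![v, v]) :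
    IntegrableOn (fun k => (ω k - ωmin)⁻¹)
      (Set.univ.pi fun _ : Fin d => Set.Ico (0 : ℝ) 1) volume := by
  have hloc : LocallyIntegrable (fun k => (ω k - ωmin)⁻¹) volume :=
    locallyIntegrable_inv_sub_of_nondegenerate_minima
      (by simpa [Nat.lt_iff_add_one_le] using hd) hsmooth hmin
      fun k₀ hk₀ v hv => by simpa [iteratedFDeriv_two_apply] using hHess k₀ hk₀ v hv
  exact (hloc.integrableOn_isCompact (isCompact_univ_pi fun _ => isCompact_Icc)).mono_set
    (Set.pi_mono fun _ _ => Ico_subset_Icc_self)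

/-- finiteness of the critical density integral
`ρ_∞ := ∫_{[0,1)^d} (ω(k) − ω_min)^{−1} dk` for a dispersion relation satisfying
Assumption (A). -/
theorem critical_density_integral_finite
    (d : ℕ) (hd : 3 ≤ d) (ω : (Fin d → ℝ) → ℝ)
    (hper : ∀ (k : Fin d → ℝ) (n : Fin d → ℤ), ω (k + fun i => (n i : ℝ)) = ω k)
    (hsmooth : ContDiff ℝ 2 ω)
    (ωmin : ℝ) (hmin : ∀ k, ωmin ≤ ω k) (hattain : ∃ k, ω k = ωmin)
    (hT0 : Set.Finite {k : Fin d → ℝ | (∀ i, k i ∈ Set.Ico (0 : ℝ) 1) ∧ ω k = ωmin})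
    (hHess : ∀ k₀ : Fin d → ℝ, ω k₀ = ωmin →
      ∀ v : Fin d → ℝ, v ≠ 0 → 0 < iteratedFDeriv ℝ 2 ω k₀ ![v, v]) :
    IntegrableOn (fun k => (ω k - ωmin)⁻¹)
      (Set.univ.pi fun _ : Fin d => Set.Ico (0 : ℝ) 1) volume :=
  critical_density_integral_finite_general d hd ω hsmooth ωmin hmin hHess
end
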